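/- arXiv:2406.12343 — 2 statements merged into one kernel-verified Lean document; each statement's English description precedes it below -/
import Mathlib

section
/- There exists a constant C, independent of n and x, such that for every n ≥ 1 and every x ∈ C^{2r+2}[0,1], ‖K(I − Pₙ)x‖∞ ≤ C ‖x‖_{2r+2,∞} h^{2r+2}. -/
open Set MeasureTheory

/-- The Fredholm integral operator with a Green's-function-type kernel. -/
noncomputable def Kop (κ₁ κ₂ : ℝ → ℝ → ℝ) (x : ℝ → ℝ) (s : ℝ) : ℝ :=
  ∫ t in (0:ℝ)..1, (if t ≤ s then κ₁ s t else κ₂ s t) * x t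

/-- The supremum norm on `[0,1]`. -/
noncomputable def supNorm (x : ℝ → ℝ) : ℝ := ⨆ t : Set.Icc (0:ℝ) 1, |x t.1|

/-- The index `j ∈ {1,…,n}` such that `s` belongs to the subinterval `[t_{j−1}, t_j)` of the
uniform partition `t_j = j/n` (with `j = n` for `s = 1`). -/
noncomputable def interpIdx (n : ℕ) (s : ℝ) : ℕ := min n (⌊s * n⌋.toNat + 1)

/-- The `2r+1` equidistant collocation points `τ_j^k = t_{j−1} + (k/(2r))·h` in the subinterval
`[t_{j−1}, t_j]`, where `h = 1/n`. -/
noncomputable def nodes (r n j : ℕ) : Fin (2 * r + 1) → ℝ :=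
  fun k => ((j:ℝ) - 1) / n + ((k.1:ℝ) / (2 * r)) * (1 / n)

/-- The piecewise interpolatory projection `Pₙ`: on each subinterval `[t_{j−1}, t_j]`, `Pₙ x`
is the unique polynomial of degree `≤ 2r` interpolating `x` at the `2r+1` equidistant
collocation points of that subinterval. -/
noncomputable def Pn (r n : ℕ) (x : ℝ → ℝ) (s : ℝ) : ℝ :=
  Polynomial.eval s
    (Lagrange.interpolate (Finset.univ : Finset (Fin (2 * r + 1)))
      (nodes r n (interpIdx n s)) (fun k => x (nodes r n (interpIdx n s) k)))

/-- The norm `‖x‖_{m,∞} = max_{0 ≤ i ≤ m} ‖x^{(i)}‖_∞` for `x ∈ C^m[0,1]`. -/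
noncomputable def normC (m : ℕ) (x : ℝ → ℝ) : ℝ :=
  ⨆ i : Fin (m + 1), ⨆ t : Set.Icc (0:ℝ) 1, |iteratedDerivWithin i.1 x (Set.Icc 0 1) t.1|

namespace Aux
open Polynomial Finset

lemma one_le_abs_natCast_sub {i j : ℕ} (h : i ≠ j) : 1 ≤ |(i:ℝ) - (j:ℝ)| := by
  rcases lt_or_gt_of_ne h with hij | hij
  · have h1 : (i:ℝ) + 1 ≤ j := by exact_mod_cast hij
    rw [abs_sub_comm, abs_of_nonneg (by linarith)]; linarith
  · have h1 : (j:ℝ) + 1 ≤ i := by exact_mod_cast hij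
    rw [abs_of_nonneg (by linarith)]; linarith

variable {r n j : ℕ}

lemma nodes_eq (hr : 1 ≤ r) (hn : 1 ≤ n) (j : ℕ) (k : Fin (2*r+1)) :
    nodes r n j k = ((j:ℝ) - 1) / n + (k.1:ℝ) * (1/(2*r*n)) := by
  have h2r : (2*(r:ℝ)) ≠ 0 := by positivity
  have hn' : (n:ℝ) ≠ 0 := by positivity
  simp only [nodes]
  field_simp

lemma nodes_sub (hr : 1 ≤ r) (hn : 1 ≤ n) (j : ℕ) (k i : Fin (2*r+1)) :
    nodes r n j k - nodes r n j i = ((k.1:ℝ) - i.1) * (1/(2*r*n)) := by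
  rw [nodes_eq hr hn, nodes_eq hr hn]; ring

lemma nodes_mem (hr : 1 ≤ r) (hn : 1 ≤ n) (j : ℕ) (k : Fin (2*r+1)) :
    nodes r n j k ∈ Icc (((j:ℝ)-1)/n) ((j:ℝ)/n) := by
  have h2r : (0:ℝ) < 2*(r:ℝ) := by positivity
  have hn' : (0:ℝ) < (n:ℝ) := by exact_mod_cast hn
  have hk : (k.1:ℝ) ≤ 2*r := by
    have := k.2
    have : (k.1:ℝ) ≤ 2*r := by exact_mod_cast Nat.lt_succ_iff.mp (by exact_mod_cast k.2)
    exact this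
  constructor
  · simp only [nodes]
    have : 0 ≤ ((k.1:ℝ) / (2 * r)) * (1 / n) := by positivity
    linarith
  · simp only [nodes]
    have h1 : ((k.1:ℝ) / (2 * r)) * (1 / n) ≤ 1 * (1 / n) := by
      apply mul_le_mul_of_nonneg_right _ (by positivity)
      rw [div_le_one (by positivity)]; exact hk
    have h2 : ((j:ℝ)-1)/n + 1/n = (j:ℝ)/n := by field_simp; ring
    linarith

lemma nodes_injective (hr : 1 ≤ r) (hn : 1 ≤ n) (j : ℕ) :
    Function.Injective (nodes r n j) := by
  intro k i hki
  have h := sub_eq_zero.2 hki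
  rw [nodes_sub hr hn] at h
  have hd : (1/(2*(r:ℝ)*n)) ≠ 0 := by positivity
  have : (k.1:ℝ) = i.1 := by
    have := mul_eq_zero.1 h
    rcases this with h' | h'
    · linarith [sub_eq_zero.1 h']
    · exact absurd h' hd
  exact Fin.ext (by exact_mod_cast this)


lemma abs_sub_le_width {a b t u : ℝ} (ht : t ∈ Icc a b) (hu : u ∈ Icc a b) :
    |t - u| ≤ b - a := by
  rw [abs_sub_le_iff]
  constructor <;> [skip; skip] <;> { obtain ⟨h1,h2⟩ := ht; obtain ⟨h3,h4⟩ := hu; linarith }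

/-- Lebesgue-constant-type bound for the Lagrange interpolation at the nodes. -/
lemma eval_interpolate_bound (hr : 1 ≤ r) (hn : 1 ≤ n) (j : ℕ) {t : ℝ}
    (ht : t ∈ Icc (((j:ℝ)-1)/n) ((j:ℝ)/n)) (v : Fin (2*r+1) → ℝ) {V : ℝ}
    (hv : ∀ k, |v k| ≤ V) :
    |Polynomial.eval t (Lagrange.interpolate Finset.univ (nodes r n j) v)|
      ≤ (2*r+1) * (2*r)^(2*r) * V := by
  have hn' : (0:ℝ) < (n:ℝ) := by exact_mod_cast hn
  have hb : ((j:ℝ)/n) - (((j:ℝ)-1)/n) = 1/n := by field_simp; ring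
  rw [Lagrange.interpolate_apply, Polynomial.eval_finset_sum]
  refine (Finset.abs_sum_le_sum_abs _ _).trans ?_
  have hbasis : ∀ i : Fin (2*r+1),
      |Polynomial.eval t (Lagrange.basis Finset.univ (nodes r n j) i)| ≤ ((2*r:ℕ):ℝ)^(2*r) := by
    intro i
    rw [Lagrange.basis, Polynomial.eval_prod, Finset.abs_prod]
    have hcard : (Finset.univ.erase i).card = 2*r := by
      rw [Finset.card_erase_of_mem (Finset.mem_univ i)]
      simp
    calc ∏ k ∈ Finset.univ.erase i,
          |Polynomial.eval t (Lagrange.basisDivisor (nodes r n j i) (nodes r n j k))|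
        ≤ ∏ _k ∈ Finset.univ.erase i, ((2*r:ℕ):ℝ) := by
          refine Finset.prod_le_prod (fun _ _ => abs_nonneg _) (fun k hk => ?_)
          have hki : k ≠ i := (Finset.mem_erase.mp hk).1
          have heval : Polynomial.eval t (Lagrange.basisDivisor (nodes r n j i) (nodes r n j k))
              = (nodes r n j i - nodes r n j k)⁻¹ * (t - nodes r n j k) := by
            simp [Lagrange.basisDivisor]
          rw [heval, abs_mul, abs_inv]
          have h1 : |t - nodes r n j k| ≤ 1/n := by
            have := abs_sub_le_width ht (nodes_mem hr hn j k)
            rwa [hb] at this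
          have h2 : 1/(2*(r:ℝ)*n) ≤ |nodes r n j i - nodes r n j k| := by
            rw [nodes_sub hr hn]
            rw [abs_mul, abs_of_pos (show (0:ℝ) < 1/(2*(r:ℝ)*n) by positivity)]
            have := one_le_abs_natCast_sub (fun hik => hki (Fin.ext hik).symm)
            calc 1/(2*(r:ℝ)*n) = 1 * (1/(2*(r:ℝ)*n)) := by ring
              _ ≤ |(i.1:ℝ) - k.1| * (1/(2*(r:ℝ)*n)) := by
                  apply mul_le_mul_of_nonneg_right this (by positivity)
          have hpos : (0:ℝ) < |nodes r n j i - nodes r n j k| :=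
            lt_of_lt_of_le (by positivity) h2
          calc |nodes r n j i - nodes r n j k|⁻¹ * |t - nodes r n j k|
              ≤ (1/(2*(r:ℝ)*n))⁻¹ * (1/n) := by
                apply mul_le_mul _ h1 (abs_nonneg _) (by positivity)
                exact inv_anti₀ (by positivity) h2
            _ = ((2*r:ℕ):ℝ) := by push_cast; field_simp
      _ = ((2*r:ℕ):ℝ)^(2*r) := by rw [Finset.prod_const, hcard]
  calc ∑ i : Fin (2*r+1), |Polynomial.eval t (Polynomial.C (v i) * Lagrange.basis Finset.univ (nodes r n j) i)|
      ≤ ∑ _i : Fin (2*r+1), V * ((2*r:ℕ):ℝ)^(2*r) := by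
        refine Finset.sum_le_sum (fun i _ => ?_)
        rw [Polynomial.eval_mul, Polynomial.eval_C, abs_mul]
        have hV : 0 ≤ V := le_trans (abs_nonneg _) (hv i)
        exact mul_le_mul (hv i) (hbasis i) (abs_nonneg _) hV
    _ = (2*r+1) * (2*r)^(2*r) * V := by
        rw [Finset.sum_const]
        simp only [Finset.card_univ, Fintype.card_fin, nsmul_eq_mul]
        push_cast; ring


/-- The monic node polynomial `ω(X) = ∏ (X - τ_k)`. -/
noncomputable def omegaPoly (r n j : ℕ) : Polynomial ℝ :=
  ∏ k : Fin (2*r+1), (Polynomial.X - Polynomial.C (nodes r n j k))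

lemma eval_omegaPoly (t : ℝ) :
    Polynomial.eval t (omegaPoly r n j) = ∏ k : Fin (2*r+1), (t - nodes r n j k) := by
  simp [omegaPoly, Polynomial.eval_prod]

lemma abs_eval_omegaPoly_le (hr : 1 ≤ r) (hn : 1 ≤ n) (j : ℕ) {t : ℝ}
    (ht : t ∈ Icc (((j:ℝ)-1)/n) ((j:ℝ)/n)) :
    |Polynomial.eval t (omegaPoly r n j)| ≤ (1/(n:ℝ))^(2*r+1) := by
  have hn' : (0:ℝ) < (n:ℝ) := by exact_mod_cast hn
  have hb : ((j:ℝ)/n) - (((j:ℝ)-1)/n) = 1/n := by field_simp; ring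
  rw [eval_omegaPoly, Finset.abs_prod]
  calc ∏ k : Fin (2*r+1), |t - nodes r n j k|
      ≤ ∏ _k : Fin (2*r+1), (1/(n:ℝ)) := by
        refine Finset.prod_le_prod (fun _ _ => abs_nonneg _) (fun k _ => ?_)
        have := abs_sub_le_width ht (nodes_mem hr hn j k)
        rwa [hb] at this
    _ = (1/(n:ℝ))^(2*r+1) := by rw [Finset.prod_const]; simp

/-- The integral of the node polynomial over the subinterval vanishes, by symmetry of
the equidistant nodes. -/
lemma integral_omegaPoly (hr : 1 ≤ r) (hn : 1 ≤ n) (j : ℕ) :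
    ∫ t in (((j:ℝ)-1)/n)..((j:ℝ)/n), Polynomial.eval t (omegaPoly r n j) = 0 := by
  have hn' : (0:ℝ) < (n:ℝ) := by exact_mod_cast hn
  have hrr : (0:ℝ) < (r:ℝ) := by exact_mod_cast hr
  set d : ℝ := 1/(2*(r:ℝ)*n) with hd
  set c : ℝ := ((j:ℝ)-1)/n + 1/(2*n) with hc
  set f : ℝ → ℝ := fun u => ∏ k : Fin (2*r+1), (u - ((k.1:ℝ) - r) * d) with hf
  have hfcont : Continuous f := by
    apply continuous_finset_prod
    intro k _
    exact continuous_id.sub continuous_const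
  have hodd : ∀ u : ℝ, f (-u) = - f u := by
    intro u
    have h1 : f (-u) = ∏ k : Fin (2*r+1), (-(u + ((k.1:ℝ) - r) * d)) := by
      simp only [hf]; exact Finset.prod_congr rfl (fun k _ => by ring)
    have h1' : ∏ k : Fin (2*r+1), (-(u + ((k.1:ℝ) - r) * d))
        = ((-1:ℝ)^(2*r+1)) * ∏ k : Fin (2*r+1), (u + ((k.1:ℝ) - r) * d) := by
      calc ∏ k : Fin (2*r+1), (-(u + ((k.1:ℝ) - r) * d))
          = ∏ k : Fin (2*r+1), ((-1) * (u + ((k.1:ℝ) - r) * d)) :=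
            Finset.prod_congr rfl (fun _ _ => by ring)
        _ = ((-1:ℝ)^(2*r+1)) * ∏ k : Fin (2*r+1), (u + ((k.1:ℝ) - r) * d) := by
            rw [Finset.prod_mul_distrib, Finset.prod_const]; simp
    rw [h1, h1', pow_succ, Even.neg_one_pow (even_two_mul r), one_mul]
    have h2 : ∏ k : Fin (2*r+1), (u + ((k.1:ℝ) - r) * d) = f u := by
      show _ = ∏ k : Fin (2*r+1), (u - ((k.1:ℝ) - r) * d)
      rw [← Equiv.prod_comp Fin.revPerm (fun k : Fin (2*r+1) => (u - ((k.1:ℝ) - r) * d))]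
      refine Finset.prod_congr rfl (fun k _ => ?_)
      have hv : ((Fin.revPerm k : Fin (2*r+1)).1 : ℝ) = 2*r - k.1 := by
        have hvv : (Fin.revPerm k : Fin (2*r+1)).1 = 2*r - k.1 := by
          simp [Fin.revPerm, Fin.rev]
        rw [hvv]
        have hk : k.1 ≤ 2*r := Nat.lt_succ_iff.mp k.2
        push_cast [hk]
        ring
      rw [hv]; ring
    rw [h2]; ring
  have heval : ∀ t : ℝ, Polynomial.eval t (omegaPoly r n j) = f (t - c) := by
    intro t
    rw [eval_omegaPoly, hf]
    refine Finset.prod_congr rfl (fun k _ => ?_)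
    rw [nodes_eq hr hn]
    rw [hc, hd]
    field_simp
    ring
  have hint : ∀ g : ℝ → ℝ, (∫ t in (((j:ℝ)-1)/n)..((j:ℝ)/n), g (t - c)) =
      ∫ u in (-(1/(2*(n:ℝ))))..(1/(2*(n:ℝ))), g u := by
    intro g
    rw [intervalIntegral.integral_comp_sub_right g c]
    congr 1
    · rw [hc]; ring
    · rw [hc]; field_simp; ring
  simp_rw [heval]
  rw [hint f]
  -- odd function integrates to zero on symmetric interval
  have h1 : (∫ u in (-(1/(2*(n:ℝ))))..(0:ℝ), f u) = - ∫ u in (0:ℝ)..(1/(2*(n:ℝ))), f u := by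
    have := intervalIntegral.integral_comp_neg (a := (0:ℝ)) (b := 1/(2*(n:ℝ))) f
    rw [neg_zero] at this
    rw [← this]
    have : ∀ u, f (-u) = -f u := hodd
    calc (∫ u in (0:ℝ)..(1/(2*(n:ℝ))), f (-u)) = ∫ u in (0:ℝ)..(1/(2*(n:ℝ))), -f u := by
          simp_rw [hodd]
      _ = - ∫ u in (0:ℝ)..(1/(2*(n:ℝ))), f u := intervalIntegral.integral_neg
  have h2 : (∫ u in (-(1/(2*(n:ℝ))))..(1/(2*(n:ℝ))), f u) =
      (∫ u in (-(1/(2*(n:ℝ))))..(0:ℝ), f u) + ∫ u in (0:ℝ)..(1/(2*(n:ℝ))), f u := by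
    rw [intervalIntegral.integral_add_adjacent_intervals] <;>
      exact hfcont.intervalIntegrable _ _
  rw [h2, h1]; ring


lemma abs_iteratedDerivWithin_le_normC {m i : ℕ} {x : ℝ → ℝ}
    (hx : ContDiffOn ℝ m x (Icc 0 1)) (him : i ≤ m) {t : ℝ} (ht : t ∈ Icc (0:ℝ) 1) :
    |iteratedDerivWithin i x (Icc 0 1) t| ≤ normC m x := by
  have hud : UniqueDiffOn ℝ (Icc (0:ℝ) 1) := uniqueDiffOn_Icc one_pos
  have hcont : ContinuousOn (iteratedDerivWithin i x (Icc 0 1)) (Icc 0 1) :=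
    hx.continuousOn_iteratedDerivWithin (by exact_mod_cast him) hud
  have hbdd : BddAbove (Set.range fun t : Set.Icc (0:ℝ) 1 =>
      |iteratedDerivWithin i x (Icc 0 1) t.1|) := by
    have hc : ContinuousOn (fun z => |iteratedDerivWithin i x (Icc 0 1) z|) (Icc (0:ℝ) 1) :=
      hcont.abs
    have himg := (isCompact_Icc (a := (0:ℝ)) (b := 1)).bddAbove_image hc
    have : (Set.range fun t : Set.Icc (0:ℝ) 1 => |iteratedDerivWithin i x (Icc 0 1) t.1|)
        = (fun z => |iteratedDerivWithin i x (Icc 0 1) z|) '' (Icc (0:ℝ) 1) := by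
      rw [show ((fun z => |iteratedDerivWithin i x (Icc 0 1) z|) '' (Icc (0:ℝ) 1))
          = Set.range ((fun z => |iteratedDerivWithin i x (Icc 0 1) z|) ∘ Subtype.val) by
        rw [Set.range_comp, Subtype.range_coe]]
      rfl
    rwa [this]
  have h1 : |iteratedDerivWithin i x (Icc 0 1) t|
      ≤ ⨆ t : Set.Icc (0:ℝ) 1, |iteratedDerivWithin i x (Icc 0 1) t.1| :=
    le_ciSup hbdd ⟨t, ht⟩
  refine h1.trans ?_
  have hbdd2 : BddAbove (Set.range fun i : Fin (m+1) =>
      ⨆ t : Set.Icc (0:ℝ) 1, |iteratedDerivWithin i.1 x (Icc 0 1) t.1|) :=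
    Set.Finite.bddAbove (Set.finite_range _)
  exact le_ciSup hbdd2 ⟨i, Nat.lt_succ_of_le him⟩

lemma normC_nonneg {m : ℕ} {x : ℝ → ℝ} (hx : ContDiffOn ℝ m x (Icc 0 1)) :
    0 ≤ normC m x :=
  le_trans (abs_nonneg _) (abs_iteratedDerivWithin_le_normC hx (Nat.zero_le m)
    (left_mem_Icc.2 zero_le_one))

lemma abs_iteratedDerivWithin_Icc_le {m i : ℕ} {x : ℝ → ℝ}
    (hx : ContDiffOn ℝ m x (Icc 0 1)) (him : i ≤ m) {a b y : ℝ}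
    (ha : 0 ≤ a) (hab : a < b) (hb : b ≤ 1) (hy : y ∈ Icc a b) :
    |iteratedDerivWithin i x (Icc a b) y| ≤ normC m x := by
  have key : ∀ z ∈ Ioo a b,
      iteratedDerivWithin i x (Icc a b) z = iteratedDerivWithin i x (Icc 0 1) z := by
    intro z hz
    have hset : Icc a b =ᶠ[nhds z] Icc (0:ℝ) 1 := by
      have hmem : Ioo a b ∈ nhds z := Ioo_mem_nhds hz.1 hz.2
      filter_upwards [hmem] with w hw
      have h1 : w ∈ Icc a b := Ioo_subset_Icc_self hw
      have h2 : w ∈ Icc (0:ℝ) 1 := ⟨le_trans ha h1.1, le_trans h1.2 hb⟩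
      simp only [eq_iff_iff]
      exact ⟨fun _ => h2, fun _ => h1⟩
    rw [iteratedDerivWithin_eq_iteratedFDerivWithin,
      iteratedDerivWithin_eq_iteratedFDerivWithin, iteratedFDerivWithin_congr_set hset]
  have hxab : ContDiffOn ℝ m x (Icc a b) := hx.mono (Icc_subset_Icc ha hb)
  have hcont : ContinuousOn (iteratedDerivWithin i x (Icc a b)) (Icc a b) :=
    hxab.continuousOn_iteratedDerivWithin (by exact_mod_cast him) (uniqueDiffOn_Icc hab)
  have hclos : y ∈ closure (Ioo a b) := by rw [closure_Ioo hab.ne]; exact hy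
  have hne : (nhdsWithin y (Ioo a b)).NeBot := mem_closure_iff_nhdsWithin_neBot.1 hclos
  have htend : Filter.Tendsto (fun z => |iteratedDerivWithin i x (Icc a b) z|)
      (nhdsWithin y (Ioo a b)) (nhds |iteratedDerivWithin i x (Icc a b) y|) :=
    Filter.Tendsto.abs ((hcont y hy).mono Ioo_subset_Icc_self)
  refine le_of_tendsto htend ?_
  filter_upwards [self_mem_nhdsWithin] with z hz
  rw [key z hz]
  exact abs_iteratedDerivWithin_le_normC hx him
    ⟨le_trans ha hz.1.le, le_trans hz.2.le hb⟩


/-- Constant in the pointwise interpolation error bound. -/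
noncomputable def CEc (r : ℕ) : ℝ := (2 + (2*(r:ℝ)+1) * (2*(r:ℝ))^(2*r)) / (Nat.factorial (2*r+1))

/-- Constant in the integrated interpolation error bound. -/
noncomputable def CIc (r : ℕ) : ℝ := (1 + (2*(r:ℝ)+1) * (2*(r:ℝ))^(2*r)) / (Nat.factorial (2*r+1))

lemma CEc_nonneg (r : ℕ) : 0 ≤ CEc r := by unfold CEc; positivity

lemma CIc_nonneg (r : ℕ) : 0 ≤ CIc r := by unfold CIc; positivity

/-- The local interpolation polynomial on subinterval `j`. -/
noncomputable def interpPoly (r n j : ℕ) (x : ℝ → ℝ) : Polynomial ℝ :=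
  Lagrange.interpolate Finset.univ (nodes r n j) (fun k => x (nodes r n j k))

/-- Error bounds for local polynomial interpolation: a pointwise bound of order `h^(2r+1)`
and a bound of order `h^(2r+3)` for the integral of the error over the subinterval
(superconvergence coming from the symmetry of the nodes). -/
lemma interp_error (hr : 1 ≤ r) (hn : 1 ≤ n) (hj1 : 1 ≤ j) (hjn : j ≤ n)
    {x : ℝ → ℝ} (hx : ContDiffOn ℝ (2*r+2 : ℕ) x (Icc 0 1)) :
    (∀ t ∈ Icc (((j:ℝ)-1)/n) ((j:ℝ)/n),
      |x t - Polynomial.eval t (interpPoly r n j x)|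
        ≤ CEc r * normC (2*r+2) x * (1/(n:ℝ))^(2*r+1)) ∧
    |∫ t in (((j:ℝ)-1)/n)..((j:ℝ)/n), (x t - Polynomial.eval t (interpPoly r n j x))|
        ≤ CIc r * normC (2*r+2) x * (1/(n:ℝ))^(2*r+3) := by
  simp only [CEc, CIc]
  have hn' : (0:ℝ) < (n:ℝ) := by exact_mod_cast hn
  set a : ℝ := ((j:ℝ)-1)/n with ha_def
  set b : ℝ := ((j:ℝ)/n) with hb_def
  have hj1' : (1:ℝ) ≤ (j:ℝ) := by exact_mod_cast hj1
  have hjn' : (j:ℝ) ≤ (n:ℝ) := by exact_mod_cast hjn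
  have ha0 : 0 ≤ a := by
    rw [ha_def]; apply div_nonneg _ hn'.le; linarith
  have hwidth : b - a = 1/n := by rw [ha_def, hb_def]; field_simp; ring
  have hab : a < b := by
    have : (0:ℝ) < 1/n := by positivity
    linarith
  have hb1 : b ≤ 1 := by
    rw [hb_def, div_le_one hn']; exact hjn'
  have hsub : Icc a b ⊆ Icc (0:ℝ) 1 := Icc_subset_Icc ha0 hb1
  set M : ℝ := normC (2*r+2) x with hM_def
  have hM0 : 0 ≤ M := normC_nonneg hx
  have hh0 : (0:ℝ) < 1/n := by positivity
  have hh1 : (1:ℝ)/n ≤ 1 := by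
    rw [div_le_one hn']; exact_mod_cast hn
  set τ : Fin (2*r+1) → ℝ := nodes r n j with hτ_def
  have hτinj : Set.InjOn τ (Finset.univ : Finset (Fin (2*r+1))) :=
    Set.injOn_of_injective (nodes_injective hr hn j)
  have hcard : (Finset.univ : Finset (Fin (2*r+1))).card = 2*r+1 := by simp
  -- the Taylor polynomial of degree 2r+1 at a
  set q : Polynomial ℝ := ∑ i ∈ Finset.range (2*r+2),
    Polynomial.C (iteratedDerivWithin i x (Icc a b) a / (Nat.factorial i)) *
      (Polynomial.X - Polynomial.C a)^i with hq_def
  set cN : ℝ := iteratedDerivWithin (2*r+1) x (Icc a b) a / (Nat.factorial (2*r+1)) with hcN_def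
  set gP : Polynomial ℝ := (Polynomial.X - Polynomial.C a)^(2*r+1) with hgP_def
  set q' : Polynomial ℝ := ∑ i ∈ Finset.range (2*r+1),
    Polynomial.C (iteratedDerivWithin i x (Icc a b) a / (Nat.factorial i)) *
      (Polynomial.X - Polynomial.C a)^i with hq'_def
  have hq_split : q = q' + Polynomial.C cN * gP := by
    rw [hq_def, Finset.sum_range_succ, hq'_def, hcN_def, hgP_def]
  -- q evaluates to the Taylor polynomial
  have hq_eval : ∀ t : ℝ, Polynomial.eval t q = taylorWithinEval x (2*r+1) (Icc a b) a t := by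
    intro t
    rw [taylor_within_apply, hq_def, Polynomial.eval_finset_sum]
    refine Finset.sum_congr rfl (fun i _ => ?_)
    simp only [Polynomial.eval_mul, Polynomial.eval_C, Polynomial.eval_pow,
      Polynomial.eval_sub, Polynomial.eval_X, smul_eq_mul]
    field_simp
  set ρ : ℝ → ℝ := fun t => x t - Polynomial.eval t q with hρ_def
  set pρ : Polynomial ℝ := Lagrange.interpolate Finset.univ τ (fun k => ρ (τ k)) with hpρ_def
  -- the remainder bound
  have hρ_bound : ∀ t ∈ Icc a b, |ρ t| ≤ M * (1/(n:ℝ))^(2*r+2) / (Nat.factorial (2*r+1)) := by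
    intro t ht
    have hxab : ContDiffOn ℝ ((2*r+1 : ℕ) + 1) x (Icc a b) := by
      exact_mod_cast hx.mono hsub
    have hC : ∀ y ∈ Icc a b, ‖iteratedDerivWithin ((2*r+1)+1) x (Icc a b) y‖ ≤ M := by
      intro y hy
      rw [Real.norm_eq_abs]
      exact abs_iteratedDerivWithin_Icc_le hx (by omega) ha0 hab hb1 hy
    have := taylor_mean_remainder_bound hab.le hxab ht hC
    rw [Real.norm_eq_abs, ← hq_eval t] at this
    refine this.trans ?_
    have h2 : 0 ≤ t - a := by linarith [ht.1]
    have h3 : t - a ≤ 1/n := by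
      have := ht.2
      linarith [hwidth]
    have h1 : (t - a)^(2*r+1+1) ≤ (1/(n:ℝ))^(2*r+2) := by
      rw [show 2*r+1+1 = 2*r+2 from rfl]
      exact pow_le_pow_left₀ h2 h3 _
    rw [show 2*r+1+1 = 2*r+2 from rfl]
    gcongr
  have hfac : (0:ℝ) < ((Nat.factorial (2*r+1)):ℝ) := by positivity
  -- bound on the leading Taylor coefficient
  have hcN : |cN| ≤ M / (Nat.factorial (2*r+1)) := by
    rw [hcN_def, abs_div, abs_of_nonneg hfac.le]
    gcongr
    exact abs_iteratedDerivWithin_Icc_le hx (by omega) ha0 hab hb1 (left_mem_Icc.2 hab.le)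
  -- degree bound for q'
  have hq'deg : q'.degree < ((2*r+1 : ℕ) : WithBot ℕ) := by
    rw [hq'_def]
    refine lt_of_le_of_lt (Polynomial.degree_sum_le _ _) ?_
    rw [Finset.sup_lt_iff (by exact WithBot.bot_lt_coe _)]
    intro i hi
    refine lt_of_le_of_lt (Polynomial.degree_mul_le _ _) ?_
    have h1 : (Polynomial.C (iteratedDerivWithin i x (Icc a b) a / (Nat.factorial i) : ℝ)).degree ≤ 0 :=
      Polynomial.degree_C_le
    have h2 : ((Polynomial.X - Polynomial.C a)^i).degree = (i : WithBot ℕ) := by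
      rw [Polynomial.degree_pow, Polynomial.degree_X_sub_C]
      simp
    rw [h2]
    have hi' : i < 2*r+1 := Finset.mem_range.mp hi
    calc (Polynomial.C (iteratedDerivWithin i x (Icc a b) a / (Nat.factorial i) : ℝ)).degree
          + (i : WithBot ℕ) ≤ 0 + (i : WithBot ℕ) := add_le_add_left h1 _
      _ = (i : WithBot ℕ) := by rw [zero_add]
      _ < ((2*r+1 : ℕ) : WithBot ℕ) := by exact_mod_cast hi'
  have hq'interp : Lagrange.interpolate Finset.univ τ (fun k => Polynomial.eval (τ k) q') = q' := by
    exact (Lagrange.eq_interpolate (v := τ) (f := q') hτinj (by rw [hcard]; exact hq'deg)).symm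
  -- interpolation of the monomial (X-a)^(2r+1)
  have hωeval0 : ∀ k : Fin (2*r+1), Polynomial.eval (τ k) (omegaPoly r n j) = 0 := by
    intro k
    rw [eval_omegaPoly]
    exact Finset.prod_eq_zero (Finset.mem_univ k) (sub_self _)
  have hωmonic : (omegaPoly r n j).Monic :=
    Polynomial.monic_prod_of_monic _ _ (fun k _ => Polynomial.monic_X_sub_C _)
  have hgmonic : gP.Monic := (Polynomial.monic_X_sub_C a).pow _
  have hgdeg : gP.degree = ((2*r+1 : ℕ) : WithBot ℕ) := by
    rw [hgP_def, Polynomial.degree_pow, Polynomial.degree_X_sub_C]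
    simp
  have hωdeg : (omegaPoly r n j).degree = ((2*r+1 : ℕ) : WithBot ℕ) := by
    rw [omegaPoly, Polynomial.degree_prod]
    simp [Polynomial.degree_X_sub_C]
  have hgω : Lagrange.interpolate Finset.univ τ (fun k => Polynomial.eval (τ k) gP)
      = gP - omegaPoly r n j := by
    have hdeg : (gP - omegaPoly r n j).degree < ((2*r+1 : ℕ) : WithBot ℕ) := by
      rw [← hgdeg]
      refine Polynomial.degree_sub_lt (by rw [hgdeg, hωdeg]) hgmonic.ne_zero ?_
      rw [hgmonic.leadingCoeff, hωmonic.leadingCoeff]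
    have h1 := Lagrange.eq_interpolate (v := τ) (f := gP - omegaPoly r n j) hτinj
      (by rw [hcard]; exact hdeg)
    have h2 : (fun k => Polynomial.eval (τ k) gP)
        = (fun i => Polynomial.eval (τ i) (gP - omegaPoly r n j)) := by
      funext k
      rw [Polynomial.eval_sub, hωeval0 k, sub_zero]
    rw [h2, ← h1]
  -- decomposition of the interpolation polynomial
  have hdecomp : interpPoly r n j x = q' + cN • (gP - omegaPoly r n j) + pρ := by
    have hvals : (fun k => x (τ k)) = (fun k => Polynomial.eval (τ k) q')
        + cN • (fun k => Polynomial.eval (τ k) gP) + (fun k => ρ (τ k)) := by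
      funext k
      simp only [Pi.add_apply, Pi.smul_apply, smul_eq_mul, hρ_def]
      have h2 := congrArg (Polynomial.eval (τ k)) hq_split
      simp only [Polynomial.eval_add, Polynomial.eval_mul, Polynomial.eval_C] at h2
      rw [h2]; ring
    show Lagrange.interpolate Finset.univ τ (fun k => x (τ k)) = _
    rw [hvals, map_add, map_add, _root_.map_smul, hq'interp, hgω, hpρ_def]
  -- key pointwise identity for the interpolation error
  have hkey : ∀ t : ℝ, x t - Polynomial.eval t (interpPoly r n j x)
      = (ρ t - Polynomial.eval t pρ) + cN * Polynomial.eval t (omegaPoly r n j) := by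
    intro t
    have h1 := congrArg (Polynomial.eval t) hdecomp
    simp only [Polynomial.eval_add, Polynomial.eval_smul, Polynomial.eval_sub,
      smul_eq_mul] at h1
    have h2 := congrArg (Polynomial.eval t) hq_split
    simp only [Polynomial.eval_add, Polynomial.eval_mul, Polynomial.eval_C] at h2
    simp only [hρ_def]
    rw [h1, h2]; ring
  have hρτ : ∀ k : Fin (2*r+1), |ρ (τ k)| ≤ M * (1/(n:ℝ))^(2*r+2) / (Nat.factorial (2*r+1)) :=
    fun k => hρ_bound _ (nodes_mem hr hn j k)
  set Λ : ℝ := (2*(r:ℝ)+1) * (2*(r:ℝ))^(2*r) with hΛ_def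
  have hΛ0 : 0 ≤ Λ := by positivity
  set V : ℝ := M * (1/(n:ℝ))^(2*r+2) / (Nat.factorial (2*r+1)) with hV_def
  have hV0 : 0 ≤ V := by positivity
  set W : ℝ := M * (1/(n:ℝ))^(2*r+1) / (Nat.factorial (2*r+1)) with hW_def
  have hVW : V ≤ W := by
    rw [hV_def, hW_def]
    gcongr M * ?_ / _
    exact pow_le_pow_of_le_one hh0.le hh1 (by omega)
  have hpρt : ∀ t ∈ Icc a b, |Polynomial.eval t pρ| ≤ Λ * V := by
    intro t ht
    have := eval_interpolate_bound hr hn j ht (fun k => ρ (τ k)) hρτ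
    rw [hpρ_def]
    refine this.trans_eq ?_
    rw [hΛ_def, hV_def]
  constructor
  · -- pointwise bound
    intro t ht
    rw [hkey t]
    have t1 : |ρ t| ≤ V := hρ_bound t ht
    have t2 : |Polynomial.eval t pρ| ≤ Λ * V := hpρt t ht
    have t3 : |cN * Polynomial.eval t (omegaPoly r n j)| ≤ (M / (Nat.factorial (2*r+1))) * (1/(n:ℝ))^(2*r+1) := by
      rw [abs_mul]
      exact mul_le_mul hcN (abs_eval_omegaPoly_le hr hn j ht) (abs_nonneg _) (by positivity)
    have t4 : |(ρ t - Polynomial.eval t pρ) + cN * Polynomial.eval t (omegaPoly r n j)|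
        ≤ |ρ t| + |Polynomial.eval t pρ| + |cN * Polynomial.eval t (omegaPoly r n j)| := by
      refine (abs_add_le _ _).trans ?_
      have := abs_sub (ρ t) (Polynomial.eval t pρ)
      linarith
    have t5 : Λ * V ≤ Λ * W := mul_le_mul_of_nonneg_left hVW hΛ0
    have hEq : (2 + Λ) / (Nat.factorial (2*r+1)) * M * (1/(n:ℝ))^(2*r+1)
        = W + Λ * W + W := by
      rw [hW_def]; field_simp; ring
    have hrhs : (2 + (2*(r:ℝ)+1) * (2*(r:ℝ))^(2*r)) / (Nat.factorial (2*r+1)) * normC (2*r+2) x * (1/(n:ℝ))^(2*r+1)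
        = (2 + Λ) / (Nat.factorial (2*r+1)) * M * (1/(n:ℝ))^(2*r+1) := by
      rw [hΛ_def, hM_def]
    calc |(ρ t - Polynomial.eval t pρ) + cN * Polynomial.eval t (omegaPoly r n j)|
        ≤ |ρ t| + |Polynomial.eval t pρ| + |cN * Polynomial.eval t (omegaPoly r n j)| := t4
      _ ≤ V + Λ * V + (M / (Nat.factorial (2*r+1))) * (1/(n:ℝ))^(2*r+1) := by
          gcongr
      _ ≤ W + Λ * W + W := by
          have : (M / (Nat.factorial (2*r+1))) * (1/(n:ℝ))^(2*r+1) = W := by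
            rw [hW_def]; ring
          rw [this]
          gcongr
      _ = (2 + Λ) / (Nat.factorial (2*r+1)) * M * (1/(n:ℝ))^(2*r+1) := hEq.symm
      _ = _ := hrhs.symm
  · -- integral bound
    have hcongr : (∫ t in a..b, (x t - Polynomial.eval t (interpPoly r n j x)))
        = ∫ t in a..b, ((ρ t - Polynomial.eval t pρ) + cN * Polynomial.eval t (omegaPoly r n j)) := by
      simp_rw [hkey]
    have hI1 : IntervalIntegrable (fun t => ρ t - Polynomial.eval t pρ) volume a b := by
      apply ContinuousOn.intervalIntegrable
      apply ContinuousOn.sub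
      · apply ContinuousOn.sub
        · exact (hx.continuousOn.mono hsub).mono (by rw [uIcc_of_le hab.le])
        · exact (Polynomial.continuous q).continuousOn
      · exact (Polynomial.continuous pρ).continuousOn
    have hI2 : IntervalIntegrable (fun t => cN * Polynomial.eval t (omegaPoly r n j)) volume a b :=
      (continuous_const.mul (Polynomial.continuous _)).intervalIntegrable _ _
    rw [hcongr, intervalIntegral.integral_add hI1 hI2]
    have hz : (∫ t in a..b, cN * Polynomial.eval t (omegaPoly r n j)) = 0 := by
      rw [intervalIntegral.integral_const_mul]
      rw [ha_def, hb_def, integral_omegaPoly hr hn j, mul_zero]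
    rw [hz, add_zero]
    have hb1' : ∀ t ∈ Set.uIoc a b, ‖ρ t - Polynomial.eval t pρ‖ ≤ (1 + Λ) * V := by
      intro t ht
      rw [Set.uIoc_of_le hab.le] at ht
      have ht' : t ∈ Icc a b := Ioc_subset_Icc_self ht
      rw [Real.norm_eq_abs]
      have := abs_sub (ρ t) (Polynomial.eval t pρ)
      have t1 : |ρ t| ≤ V := hρ_bound t ht'
      have t2 : |Polynomial.eval t pρ| ≤ Λ * V := hpρt t ht'
      nlinarith
    have := intervalIntegral.norm_integral_le_of_norm_le_const hb1'
    rw [Real.norm_eq_abs] at this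
    refine this.trans ?_
    rw [abs_of_pos (by linarith : (0:ℝ) < b - a), hwidth, hV_def]
    apply le_of_eq
    rw [show 2*r+3 = (2*r+2)+1 from rfl, pow_succ, hΛ_def, hM_def]
    push_cast
    ring


/-! ### Kernel bounds on the triangles -/

lemma isLinearMap_snd : IsLinearMap ℝ (fun p : ℝ × ℝ => p.2) :=
  ⟨fun _ _ => rfl, fun _ _ => rfl⟩

lemma isLinearMap_fst : IsLinearMap ℝ (fun p : ℝ × ℝ => p.1) :=
  ⟨fun _ _ => rfl, fun _ _ => rfl⟩

lemma isLinearMap_sub_snd_fst : IsLinearMap ℝ (fun p : ℝ × ℝ => p.2 - p.1) :=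
  ⟨fun a b => by simp; ring, fun c a => by simp; ring⟩

lemma isLinearMap_sub_fst_snd : IsLinearMap ℝ (fun p : ℝ × ℝ => p.1 - p.2) :=
  ⟨fun a b => by simp; ring, fun c a => by simp; ring⟩

lemma tri1_convex : Convex ℝ {p : ℝ × ℝ | 0 ≤ p.2 ∧ p.2 ≤ p.1 ∧ p.1 ≤ 1} := by
  have h1 : {p : ℝ × ℝ | 0 ≤ p.2 ∧ p.2 ≤ p.1 ∧ p.1 ≤ 1}
      = {p : ℝ × ℝ | 0 ≤ p.2} ∩ ({p : ℝ × ℝ | p.2 - p.1 ≤ 0} ∩ {p : ℝ × ℝ | p.1 ≤ 1}) := by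
    ext p; simp only [Set.mem_setOf_eq, Set.mem_inter_iff]
    constructor
    · rintro ⟨h1, h2, h3⟩; exact ⟨h1, by linarith, h3⟩
    · rintro ⟨h1, h2, h3⟩; exact ⟨h1, by linarith, h3⟩
  rw [h1]
  exact (convex_halfSpace_ge isLinearMap_snd 0).inter
    ((convex_halfSpace_le isLinearMap_sub_snd_fst 0).inter
      (convex_halfSpace_le isLinearMap_fst 1))

lemma tri2_convex : Convex ℝ {p : ℝ × ℝ | 0 ≤ p.1 ∧ p.1 ≤ p.2 ∧ p.2 ≤ 1} := by
  have h1 : {p : ℝ × ℝ | 0 ≤ p.1 ∧ p.1 ≤ p.2 ∧ p.2 ≤ 1}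
      = {p : ℝ × ℝ | 0 ≤ p.1} ∩ ({p : ℝ × ℝ | p.1 - p.2 ≤ 0} ∩ {p : ℝ × ℝ | p.2 ≤ 1}) := by
    ext p; simp only [Set.mem_setOf_eq, Set.mem_inter_iff]
    constructor
    · rintro ⟨h1, h2, h3⟩; exact ⟨h1, by linarith, h3⟩
    · rintro ⟨h1, h2, h3⟩; exact ⟨h1, by linarith, h3⟩
  rw [h1]
  exact (convex_halfSpace_ge isLinearMap_fst 0).inter
    ((convex_halfSpace_le isLinearMap_sub_fst_snd 0).inter
      (convex_halfSpace_le isLinearMap_snd 1))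

lemma tri1_closed : IsClosed {p : ℝ × ℝ | 0 ≤ p.2 ∧ p.2 ≤ p.1 ∧ p.1 ≤ 1} := by
  refine IsClosed.inter (isClosed_le continuous_const continuous_snd) ?_
  exact IsClosed.inter (isClosed_le continuous_snd continuous_fst)
    (isClosed_le continuous_fst continuous_const)

lemma tri2_closed : IsClosed {p : ℝ × ℝ | 0 ≤ p.1 ∧ p.1 ≤ p.2 ∧ p.2 ≤ 1} := by
  refine IsClosed.inter (isClosed_le continuous_const continuous_fst) ?_
  exact IsClosed.inter (isClosed_le continuous_fst continuous_snd)
    (isClosed_le continuous_snd continuous_const)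

lemma tri1_compact : IsCompact {p : ℝ × ℝ | 0 ≤ p.2 ∧ p.2 ≤ p.1 ∧ p.1 ≤ 1} := by
  refine IsCompact.of_isClosed_subset (isCompact_Icc (a := ((0:ℝ),(0:ℝ))) (b := (1,1)))
    tri1_closed ?_
  rintro ⟨u, v⟩ ⟨h1, h2, h3⟩
  exact ⟨⟨by dsimp at *; linarith, by dsimp at *; linarith⟩,
    ⟨by dsimp at *; linarith, by dsimp at *; linarith⟩⟩

lemma tri2_compact : IsCompact {p : ℝ × ℝ | 0 ≤ p.1 ∧ p.1 ≤ p.2 ∧ p.2 ≤ 1} := by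
  refine IsCompact.of_isClosed_subset (isCompact_Icc (a := ((0:ℝ),(0:ℝ))) (b := (1,1)))
    tri2_closed ?_
  rintro ⟨u, v⟩ ⟨h1, h2, h3⟩
  exact ⟨⟨by dsimp at *; linarith, by dsimp at *; linarith⟩,
    ⟨by dsimp at *; linarith, by dsimp at *; linarith⟩⟩

lemma tri1_interior : (interior {p : ℝ × ℝ | 0 ≤ p.2 ∧ p.2 ≤ p.1 ∧ p.1 ≤ 1}).Nonempty := by
  have hU : IsOpen ({p : ℝ × ℝ | 0 < p.2} ∩ ({p : ℝ × ℝ | p.2 < p.1} ∩ {p : ℝ × ℝ | p.1 < 1})) :=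
    IsOpen.inter (isOpen_lt continuous_const continuous_snd)
      (IsOpen.inter (isOpen_lt continuous_snd continuous_fst)
        (isOpen_lt continuous_fst continuous_const))
  have hsub : ({p : ℝ × ℝ | 0 < p.2} ∩ ({p : ℝ × ℝ | p.2 < p.1} ∩ {p : ℝ × ℝ | p.1 < 1}))
      ⊆ {p : ℝ × ℝ | 0 ≤ p.2 ∧ p.2 ≤ p.1 ∧ p.1 ≤ 1} := by
    rintro p ⟨h1, h2, h3⟩; exact ⟨h1.le, h2.le, h3.le⟩
  refine ⟨((3:ℝ)/4, (1:ℝ)/4), interior_maximal hsub hU ?_⟩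
  refine ⟨by norm_num, by norm_num, by norm_num⟩

lemma tri2_interior : (interior {p : ℝ × ℝ | 0 ≤ p.1 ∧ p.1 ≤ p.2 ∧ p.2 ≤ 1}).Nonempty := by
  have hU : IsOpen ({p : ℝ × ℝ | 0 < p.1} ∩ ({p : ℝ × ℝ | p.1 < p.2} ∩ {p : ℝ × ℝ | p.2 < 1})) :=
    IsOpen.inter (isOpen_lt continuous_const continuous_fst)
      (IsOpen.inter (isOpen_lt continuous_fst continuous_snd)
        (isOpen_lt continuous_snd continuous_const))
  have hsub : ({p : ℝ × ℝ | 0 < p.1} ∩ ({p : ℝ × ℝ | p.1 < p.2} ∩ {p : ℝ × ℝ | p.2 < 1}))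
      ⊆ {p : ℝ × ℝ | 0 ≤ p.1 ∧ p.1 ≤ p.2 ∧ p.2 ≤ 1} := by
    rintro p ⟨h1, h2, h3⟩; exact ⟨h1.le, h2.le, h3.le⟩
  refine ⟨((1:ℝ)/4, (3:ℝ)/4), interior_maximal hsub hU ?_⟩
  refine ⟨by norm_num, by norm_num, by norm_num⟩

/-- Boundedness and a Lipschitz-type estimate for a `C¹` function on a convex compact set. -/
lemma kernel_bounds {f : ℝ × ℝ → ℝ} {T : Set (ℝ × ℝ)} (hT1 : IsCompact T) (hT2 : Convex ℝ T)
    (hT3 : (interior T).Nonempty) (hf : ContDiffOn ℝ 1 f T) :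
    ∃ B L : ℝ, 0 ≤ B ∧ 0 ≤ L ∧ (∀ p ∈ T, |f p| ≤ B) ∧
      (∀ p ∈ T, ∀ q ∈ T, |f p - f q| ≤ L * ‖p - q‖) := by
  obtain ⟨B₀, hB₀⟩ := hT1.exists_bound_of_continuousOn hf.continuousOn
  have hud : UniqueDiffOn ℝ T := uniqueDiffOn_convex hT2 hT3
  obtain ⟨L₀, hL₀⟩ := hT1.exists_bound_of_continuousOn (hf.continuousOn_fderivWithin hud le_rfl)
  refine ⟨max B₀ 0, max L₀ 0, le_max_right _ _, le_max_right _ _, ?_, ?_⟩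
  · intro p hp
    exact le_trans (by rw [← Real.norm_eq_abs]; exact hB₀ p hp) (le_max_left _ _)
  · intro p hp q hq
    have hdiff : DifferentiableOn ℝ f T := hf.differentiableOn one_ne_zero
    have hbound : ∀ z ∈ T, ‖fderivWithin ℝ f T z‖ ≤ max L₀ 0 :=
      fun z hz => le_trans (hL₀ z hz) (le_max_left _ _)
    have := hT2.norm_image_sub_le_of_norm_fderivWithin_le hdiff hbound hq hp
    rwa [Real.norm_eq_abs] at this


/-! ### The interpolation index -/

lemma interpIdx_eq (hn : 1 ≤ n) {j : ℕ} (hj1 : 1 ≤ j) (hjn : j ≤ n) {t : ℝ}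
    (ht1 : ((j:ℝ)-1)/n ≤ t) (ht2 : t < (j:ℝ)/n) : interpIdx n t = j := by
  have hn' : (0:ℝ) < (n:ℝ) := by exact_mod_cast hn
  have h1 : ((j:ℝ) - 1) ≤ t * n := by
    rw [div_le_iff₀ hn'] at ht1; linarith
  have h2 : t * n < (j:ℝ) := by
    rw [lt_div_iff₀ hn'] at ht2; linarith
  have hfloor : ⌊t * (n:ℝ)⌋ = (j:ℤ) - 1 := by
    rw [Int.floor_eq_iff]
    constructor
    · push_cast; linarith
    · push_cast; linarith
  rw [interpIdx, hfloor]
  have : ((j:ℤ) - 1).toNat = j - 1 := by omega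
  rw [this]
  omega

lemma interpIdx_facts (hn : 1 ≤ n) {s : ℝ} (hs : s ∈ Icc (0:ℝ) 1) :
    1 ≤ interpIdx n s ∧ interpIdx n s ≤ n ∧
      ((interpIdx n s : ℝ)-1)/n ≤ s ∧ s ≤ (interpIdx n s : ℝ)/n := by
  have hn' : (0:ℝ) < (n:ℝ) := by exact_mod_cast hn
  have hs0 : 0 ≤ s * n := mul_nonneg hs.1 hn'.le
  have hfl0 : (0:ℤ) ≤ ⌊s * (n:ℝ)⌋ := Int.floor_nonneg.2 hs0
  set k : ℕ := ⌊s * (n:ℝ)⌋.toNat with hk_def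
  have hkcast : ((k:ℤ)) = ⌊s * (n:ℝ)⌋ := Int.toNat_of_nonneg hfl0
  have hk1 : (k:ℝ) ≤ s * n := by
    have := Int.floor_le (s * (n:ℝ))
    have h2 : ((k:ℤ):ℝ) = ((⌊s * (n:ℝ)⌋ : ℤ) : ℝ) := congrArg Int.cast hkcast
    push_cast at h2 ⊢
    linarith [h2 ▸ this]
  have hk2 : s * n < (k:ℝ) + 1 := by
    have := Int.lt_floor_add_one (s * (n:ℝ))
    have h2 : ((k:ℤ):ℝ) = ((⌊s * (n:ℝ)⌋ : ℤ) : ℝ) := congrArg Int.cast hkcast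
    push_cast at h2 ⊢
    linarith [h2 ▸ this]
  have hIdx : interpIdx n s = min n (k + 1) := rfl
  refine ⟨?_, ?_, ?_, ?_⟩
  · rw [hIdx]; omega
  · rw [hIdx]; omega
  · rw [hIdx, div_le_iff₀ hn']
    have hmin : ((min n (k+1) : ℕ) : ℝ) ≤ (k:ℝ) + 1 := by
      have : min n (k+1) ≤ k+1 := min_le_right _ _
      exact_mod_cast this
    linarith
  · rw [hIdx, le_div_iff₀ hn']
    rcases le_or_gt (k+1) n with hcase | hcase
    · have : min n (k+1) = k+1 := min_eq_right hcase
      rw [this]; push_cast; linarith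
    · have : min n (k+1) = n := min_eq_left (by omega)
      rw [this]
      have : s * n ≤ 1 * n := by
        apply mul_le_mul_of_nonneg_right hs.2 hn'.le
      linarith

/-- Interval integrability via an a.e. congruent continuous function. -/
lemma integrable_congr_cont {f g : ℝ → ℝ} {a b : ℝ} (hab : a ≤ b)
    (hg : ContinuousOn g (Icc a b)) (hfg : ∀ᵐ t ∂(volume : Measure ℝ), t ∈ Ioc a b → f t = g t) :
    IntervalIntegrable f volume a b := by
  have hgi : IntervalIntegrable g volume a b := by
    apply ContinuousOn.intervalIntegrable
    rwa [uIcc_of_le hab]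
  rw [intervalIntegrable_iff_integrableOn_Ioc_of_le hab] at hgi ⊢
  exact hgi.congr ((ae_restrict_iff' measurableSet_Ioc).2 (hfg.mono fun t h ht => (h ht).symm))


lemma Pn_eq (r n : ℕ) (x : ℝ → ℝ) {t : ℝ} {j : ℕ} (h : interpIdx n t = j) :
    Pn r n x t = Polynomial.eval t (interpPoly r n j x) := by
  rw [Pn, h]; rfl


lemma ae_ne (b : ℝ) : ∀ᵐ t ∂(volume : Measure ℝ), t ≠ b := by
  have h1 : {t : ℝ | ¬ t ≠ b} = {b} := by ext t; simp
  rw [Filter.Eventually, MeasureTheory.mem_ae_iff]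
  have h2 : {t : ℝ | t ≠ b}ᶜ = {b} := by ext t; simp
  rw [h2]
  exact Real.volume_singleton

lemma kappa1_contOn {κ₁ : ℝ → ℝ → ℝ}
    (hκ₁c : ContinuousOn (Function.uncurry κ₁) {p : ℝ × ℝ | 0 ≤ p.2 ∧ p.2 ≤ p.1 ∧ p.1 ≤ 1})
    {s u v : ℝ} (hs1 : s ≤ 1) (hu : 0 ≤ u) (hv : v ≤ s) :
    ContinuousOn (fun t => κ₁ s t) (Icc u v) := by
  have hmap : Set.MapsTo (fun t => ((s, t) : ℝ × ℝ)) (Icc u v)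
      {p : ℝ × ℝ | 0 ≤ p.2 ∧ p.2 ≤ p.1 ∧ p.1 ≤ 1} :=
    fun t ht => ⟨le_trans hu ht.1, le_trans ht.2 hv, hs1⟩
  exact hκ₁c.comp ((continuous_const.prodMk continuous_id).continuousOn) hmap

lemma kappa2_contOn {κ₂ : ℝ → ℝ → ℝ}
    (hκ₂c : ContinuousOn (Function.uncurry κ₂) {p : ℝ × ℝ | 0 ≤ p.1 ∧ p.1 ≤ p.2 ∧ p.2 ≤ 1})
    {s u v : ℝ} (hs0 : 0 ≤ s) (hu : s ≤ u) (hv : v ≤ 1) :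
    ContinuousOn (fun t => κ₂ s t) (Icc u v) := by
  have hmap : Set.MapsTo (fun t => ((s, t) : ℝ × ℝ)) (Icc u v)
      {p : ℝ × ℝ | 0 ≤ p.1 ∧ p.1 ≤ p.2 ∧ p.2 ≤ 1} :=
    fun t ht => ⟨hs0, le_trans hu ht.1, le_trans ht.2 hv⟩
  exact hκ₂c.comp ((continuous_const.prodMk continuous_id).continuousOn) hmap

/-- Integrability of the integrand over each subinterval. -/
lemma piece_integrable (hr : 1 ≤ r) (hn : 1 ≤ n) {j : ℕ} (hj1 : 1 ≤ j) (hjn : j ≤ n)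
    {κ₁ κ₂ : ℝ → ℝ → ℝ}
    (hκ₁c : ContinuousOn (Function.uncurry κ₁) {p : ℝ × ℝ | 0 ≤ p.2 ∧ p.2 ≤ p.1 ∧ p.1 ≤ 1})
    (hκ₂c : ContinuousOn (Function.uncurry κ₂) {p : ℝ × ℝ | 0 ≤ p.1 ∧ p.1 ≤ p.2 ∧ p.2 ≤ 1})
    {s : ℝ} (hs : s ∈ Icc (0:ℝ) 1) {x : ℝ → ℝ} (hxc : ContinuousOn x (Icc (0:ℝ) 1)) :
    IntervalIntegrable (fun t => (if t ≤ s then κ₁ s t else κ₂ s t) * (x t - Pn r n x t))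
      volume (((j:ℝ)-1)/n) ((j:ℝ)/n) := by
  have hn' : (0:ℝ) < (n:ℝ) := by exact_mod_cast hn
  set a : ℝ := ((j:ℝ)-1)/n with ha_def
  set b : ℝ := ((j:ℝ)/n) with hb_def
  have hj1' : (1:ℝ) ≤ (j:ℝ) := by exact_mod_cast hj1
  have hjn' : (j:ℝ) ≤ (n:ℝ) := by exact_mod_cast hjn
  have ha0 : 0 ≤ a := by rw [ha_def]; apply div_nonneg _ hn'.le; linarith
  have hwidth : b - a = 1/n := by rw [ha_def, hb_def]; field_simp; ring
  have hab : a < b := by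
    have h0 : (0:ℝ) < 1/n := by positivity
    linarith
  have hb1 : b ≤ 1 := by rw [hb_def, div_le_one hn']; exact hjn'
  set P : Polynomial ℝ := interpPoly r n j x with hP_def
  have hφc : ∀ {u v : ℝ}, 0 ≤ u → v ≤ 1 →
      ContinuousOn (fun t => x t - Polynomial.eval t P) (Icc u v) := by
    intro u v hu hv
    exact (hxc.mono (Icc_subset_Icc hu hv)).sub (Polynomial.continuous P).continuousOn
  have hPn : ∀ {t : ℝ}, a < t → t < b → Pn r n x t = Polynomial.eval t P := by
    intro t h1 h2
    exact Pn_eq r n x (interpIdx_eq hn hj1 hjn h1.le h2)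
  rcases le_or_gt b s with hbs | hbs
  · refine integrable_congr_cont hab.le
      (ContinuousOn.mul (kappa1_contOn hκ₁c hs.2 ha0 hbs) (hφc ha0 hb1)) ?_
    filter_upwards [ae_ne b] with t htb ht
    rw [hPn ht.1 (lt_of_le_of_ne ht.2 htb), if_pos (le_trans ht.2 hbs)]; rfl
  rcases le_or_gt s a with hsa | hsa
  · refine integrable_congr_cont hab.le
      (ContinuousOn.mul (kappa2_contOn hκ₂c hs.1 hsa hb1) (hφc ha0 hb1)) ?_
    filter_upwards [ae_ne b] with t htb ht
    rw [hPn ht.1 (lt_of_le_of_ne ht.2 htb),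
      if_neg (not_le.2 (lt_of_le_of_lt hsa ht.1))]; rfl
  · have hI1 : IntervalIntegrable
        (fun t => (if t ≤ s then κ₁ s t else κ₂ s t) * (x t - Pn r n x t)) volume a s := by
      refine integrable_congr_cont hsa.le
        (ContinuousOn.mul (kappa1_contOn hκ₁c hs.2 ha0 le_rfl) (hφc ha0 (le_trans hbs.le hb1))) ?_
      filter_upwards [ae_ne b] with t htb ht
      rw [hPn ht.1 (lt_of_le_of_lt ht.2 hbs), if_pos ht.2]; rfl
    have hI2 : IntervalIntegrable
        (fun t => (if t ≤ s then κ₁ s t else κ₂ s t) * (x t - Pn r n x t)) volume s b := by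
      refine integrable_congr_cont hbs.le
        (ContinuousOn.mul (kappa2_contOn hκ₂c hs.1 le_rfl hb1) (hφc (le_trans ha0 hsa.le) hb1)) ?_
      filter_upwards [ae_ne b] with t htb ht
      rw [hPn (lt_trans hsa ht.1) (lt_of_le_of_ne ht.2 htb), if_neg (not_le.2 ht.1)]; rfl
    exact hI1.trans hI2


/-- The crucial per-subinterval estimate. -/
lemma piece_bound (hr : 1 ≤ r) (hn : 1 ≤ n) {j : ℕ} (hj1 : 1 ≤ j) (hjn : j ≤ n)
    {κ₁ κ₂ : ℝ → ℝ → ℝ} {B L : ℝ} (hB0 : 0 ≤ B) (hL0 : 0 ≤ L)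
    (hB1 : ∀ p ∈ {p : ℝ × ℝ | 0 ≤ p.2 ∧ p.2 ≤ p.1 ∧ p.1 ≤ 1}, |Function.uncurry κ₁ p| ≤ B)
    (hB2 : ∀ p ∈ {p : ℝ × ℝ | 0 ≤ p.1 ∧ p.1 ≤ p.2 ∧ p.2 ≤ 1}, |Function.uncurry κ₂ p| ≤ B)
    (hL1 : ∀ p ∈ {p : ℝ × ℝ | 0 ≤ p.2 ∧ p.2 ≤ p.1 ∧ p.1 ≤ 1},
      ∀ q ∈ {p : ℝ × ℝ | 0 ≤ p.2 ∧ p.2 ≤ p.1 ∧ p.1 ≤ 1},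
        |Function.uncurry κ₁ p - Function.uncurry κ₁ q| ≤ L * ‖p - q‖)
    (hL2 : ∀ p ∈ {p : ℝ × ℝ | 0 ≤ p.1 ∧ p.1 ≤ p.2 ∧ p.2 ≤ 1},
      ∀ q ∈ {p : ℝ × ℝ | 0 ≤ p.1 ∧ p.1 ≤ p.2 ∧ p.2 ≤ 1},
        |Function.uncurry κ₂ p - Function.uncurry κ₂ q| ≤ L * ‖p - q‖)
    (hκ₁c : ContinuousOn (Function.uncurry κ₁) {p : ℝ × ℝ | 0 ≤ p.2 ∧ p.2 ≤ p.1 ∧ p.1 ≤ 1})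
    (hκ₂c : ContinuousOn (Function.uncurry κ₂) {p : ℝ × ℝ | 0 ≤ p.1 ∧ p.1 ≤ p.2 ∧ p.2 ≤ 1})
    {s : ℝ} (hs : s ∈ Icc (0:ℝ) 1) {x : ℝ → ℝ}
    (hx : ContDiffOn ℝ (2*r+2 : ℕ) x (Icc (0:ℝ) 1)) :
    |∫ t in (((j:ℝ)-1)/n)..((j:ℝ)/n),
        (if t ≤ s then κ₁ s t else κ₂ s t) * (x t - Pn r n x t)|
      ≤ (L * CEc r + B * CIc r) * normC (2*r+2) x * (1/(n:ℝ))^(2*r+3)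
        + (if j = interpIdx n s then B * CEc r * normC (2*r+2) x * (1/(n:ℝ))^(2*r+2) else 0) := by
  have hn' : (0:ℝ) < (n:ℝ) := by exact_mod_cast hn
  set a : ℝ := ((j:ℝ)-1)/n with ha_def
  set b : ℝ := ((j:ℝ)/n) with hb_def
  have hj1' : (1:ℝ) ≤ (j:ℝ) := by exact_mod_cast hj1
  have hjn' : (j:ℝ) ≤ (n:ℝ) := by exact_mod_cast hjn
  have ha0 : 0 ≤ a := by rw [ha_def]; apply div_nonneg _ hn'.le; linarith
  have hwidth : b - a = 1/n := by rw [ha_def, hb_def]; field_simp; ring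
  have hh0 : (0:ℝ) < 1/n := by positivity
  have hab : a < b := by linarith
  have hb1 : b ≤ 1 := by rw [hb_def, div_le_one hn']; exact hjn'
  set M : ℝ := normC (2*r+2) x with hM_def
  have hM0 : 0 ≤ M := normC_nonneg hx
  set P : Polynomial ℝ := interpPoly r n j x with hP_def
  set φ : ℝ → ℝ := fun t => x t - Polynomial.eval t P with hφ_def
  obtain ⟨hE, hI⟩ := interp_error hr hn hj1 hjn hx
  set E : ℝ := CEc r * M * (1/(n:ℝ))^(2*r+1) with hE_def
  have hE0 : 0 ≤ E := by
    rw [hE_def]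
    exact mul_nonneg (mul_nonneg (CEc_nonneg r) hM0) (by positivity)
  have hφb : ∀ t ∈ Icc a b, |φ t| ≤ E := fun t ht => hE t ht
  have hφcont : ContinuousOn φ (Icc a b) :=
    ((hx.continuousOn.mono (Icc_subset_Icc ha0 hb1)).sub
      (Polynomial.continuous P).continuousOn)
  have hPn : ∀ {t : ℝ}, a < t → t < b → Pn r n x t = Polynomial.eval t P := by
    intro t h1 h2
    exact Pn_eq r n x (interpIdx_eq hn hj1 hjn h1.le h2)
  set c : ℝ := (a + b)/2 with hc_def
  have hc : c ∈ Icc a b := ⟨by rw [hc_def]; linarith, by rw [hc_def]; linarith⟩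
  have hite_nonneg : 0 ≤ (if j = interpIdx n s then
      B * CEc r * M * (1/(n:ℝ))^(2*r+2) else 0) := by
    split_ifs
    · exact mul_nonneg (mul_nonneg (mul_nonneg hB0 (CEc_nonneg r)) hM0) (by positivity)
    · exact le_refl 0
  -- the main splitting bound, for either kernel
  have main : ∀ κ : ℝ → ℝ → ℝ,
      (∀ t ∈ Icc a b, |κ s t| ≤ B) →
      (∀ t ∈ Icc a b, |κ s t - κ s c| ≤ L * (1/(n:ℝ))) →
      ContinuousOn (fun t => κ s t) (Icc a b) →
      (∀ᵐ t ∂(volume : Measure ℝ), t ∈ Set.uIoc a b →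
        (if t ≤ s then κ₁ s t else κ₂ s t) * (x t - Pn r n x t) = κ s t * φ t) →
      |∫ t in a..b, (if t ≤ s then κ₁ s t else κ₂ s t) * (x t - Pn r n x t)|
        ≤ (L * CEc r + B * CIc r) * M * (1/(n:ℝ))^(2*r+3) := by
    intro κ hκB hκL hκcont hκae
    rw [intervalIntegral.integral_congr_ae hκae]
    have heq : (fun t => κ s t * φ t)
        = fun t => (κ s t - κ s c) * φ t + κ s c * φ t := funext fun t => by ring
    have hJ1 : IntervalIntegrable (fun t => (κ s t - κ s c) * φ t) volume a b := by
      apply ContinuousOn.intervalIntegrable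
      rw [uIcc_of_le hab.le]
      exact (hκcont.sub continuousOn_const).mul hφcont
    have hJ2 : IntervalIntegrable (fun t => κ s c * φ t) volume a b := by
      apply ContinuousOn.intervalIntegrable
      rw [uIcc_of_le hab.le]
      exact continuousOn_const.mul hφcont
    rw [show (∫ t in a..b, κ s t * φ t)
        = ∫ t in a..b, ((κ s t - κ s c) * φ t + κ s c * φ t) by rw [← heq]]
    rw [intervalIntegral.integral_add hJ1 hJ2]
    have h1 : |∫ t in a..b, (κ s t - κ s c) * φ t| ≤ (L * (1/(n:ℝ)) * E) * |b - a| := by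
      have := intervalIntegral.norm_integral_le_of_norm_le_const
        (C := L * (1/(n:ℝ)) * E) (f := fun t => (κ s t - κ s c) * φ t)
        (a := a) (b := b) ?_
      · rwa [Real.norm_eq_abs] at this
      · intro t ht
        rw [Set.uIoc_of_le hab.le] at ht
        have ht' : t ∈ Icc a b := Ioc_subset_Icc_self ht
        rw [Real.norm_eq_abs, abs_mul]
        exact mul_le_mul (hκL t ht') (hφb t ht') (abs_nonneg _)
          (by positivity)
    have h2 : |∫ t in a..b, κ s c * φ t| ≤ B * (CIc r * M * (1/(n:ℝ))^(2*r+3)) := by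
      rw [intervalIntegral.integral_const_mul, abs_mul]
      exact mul_le_mul (hκB c hc) hI (abs_nonneg _) hB0
    refine (abs_add_le _ _).trans ?_
    have hba : |b - a| = 1/n := by
      rw [abs_of_pos (by linarith : (0:ℝ) < b - a)]; exact hwidth
    rw [hba] at h1
    have hE1 : L * (1/(n:ℝ)) * E * (1/(n:ℝ)) = L * CEc r * M * (1/(n:ℝ))^(2*r+3) := by
      rw [hE_def, show 2*r+3 = (2*r+1)+1+1 from rfl, pow_succ, pow_succ]
      ring
    rw [hE1] at h1
    have : (L * CEc r + B * CIc r) * M * (1/(n:ℝ))^(2*r+3)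
        = L * CEc r * M * (1/(n:ℝ))^(2*r+3) + B * (CIc r * M * (1/(n:ℝ))^(2*r+3)) := by ring
    rw [this]
    exact add_le_add h1 h2
  have hnorm : ∀ t : ℝ, ‖((s,t) : ℝ × ℝ) - (s,c)‖ = |t - c| := by
    intro t
    have h1 : ((s,t) : ℝ × ℝ) - (s,c) = (0, t - c) := by
      rw [Prod.mk_sub_mk, sub_self]
    rw [h1, Prod.norm_def]
    simp [Real.norm_eq_abs]
  have htc : ∀ t ∈ Icc a b, |t - c| ≤ 1/n := by
    intro t ht
    have := abs_sub_le_width ht hc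
    rwa [hwidth] at this
  rcases le_or_gt b s with hbs | hbs
  · -- the subinterval is entirely to the left of s
    have hmem : ∀ t ∈ Icc a b, ((s, t) : ℝ × ℝ) ∈
        {p : ℝ × ℝ | 0 ≤ p.2 ∧ p.2 ≤ p.1 ∧ p.1 ≤ 1} :=
      fun t ht => ⟨le_trans ha0 ht.1, le_trans ht.2 hbs, hs.2⟩
    have hκB : ∀ t ∈ Icc a b, |κ₁ s t| ≤ B := fun t ht => hB1 (s,t) (hmem t ht)
    have hκL : ∀ t ∈ Icc a b, |κ₁ s t - κ₁ s c| ≤ L * (1/(n:ℝ)) := by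
      intro t ht
      have h := hL1 (s,t) (hmem t ht) (s,c) (hmem c hc)
      rw [hnorm t] at h
      exact h.trans (mul_le_mul_of_nonneg_left (htc t ht) hL0)
    have hae : ∀ᵐ t ∂(volume : Measure ℝ), t ∈ Set.uIoc a b →
        (if t ≤ s then κ₁ s t else κ₂ s t) * (x t - Pn r n x t) = κ₁ s t * φ t := by
      filter_upwards [ae_ne b] with t htb ht
      rw [Set.uIoc_of_le hab.le] at ht
      rw [hPn ht.1 (lt_of_le_of_ne ht.2 htb), if_pos (le_trans ht.2 hbs)]
    refine le_trans (main κ₁ hκB hκL (kappa1_contOn hκ₁c hs.2 ha0 hbs) hae) ?_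
    exact le_add_of_nonneg_right hite_nonneg
  rcases le_or_gt s a with hsa | hsa
  · -- the subinterval is entirely to the right of s
    have hmem : ∀ t ∈ Icc a b, ((s, t) : ℝ × ℝ) ∈
        {p : ℝ × ℝ | 0 ≤ p.1 ∧ p.1 ≤ p.2 ∧ p.2 ≤ 1} :=
      fun t ht => ⟨hs.1, le_trans hsa ht.1, le_trans ht.2 hb1⟩
    have hκB : ∀ t ∈ Icc a b, |κ₂ s t| ≤ B := fun t ht => hB2 (s,t) (hmem t ht)
    have hκL : ∀ t ∈ Icc a b, |κ₂ s t - κ₂ s c| ≤ L * (1/(n:ℝ)) := by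
      intro t ht
      have h := hL2 (s,t) (hmem t ht) (s,c) (hmem c hc)
      rw [hnorm t] at h
      exact h.trans (mul_le_mul_of_nonneg_left (htc t ht) hL0)
    have hae : ∀ᵐ t ∂(volume : Measure ℝ), t ∈ Set.uIoc a b →
        (if t ≤ s then κ₁ s t else κ₂ s t) * (x t - Pn r n x t) = κ₂ s t * φ t := by
      filter_upwards [ae_ne b] with t htb ht
      rw [Set.uIoc_of_le hab.le] at ht
      rw [hPn ht.1 (lt_of_le_of_ne ht.2 htb),
        if_neg (not_le.2 (lt_of_le_of_lt hsa ht.1))]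
    refine le_trans (main κ₂ hκB hκL (kappa2_contOn hκ₂c hs.1 hsa hb1) hae) ?_
    exact le_add_of_nonneg_right hite_nonneg
  · -- the subinterval containing s : crude bound
    have hidx : interpIdx n s = j := interpIdx_eq hn hj1 hjn hsa.le hbs
    have hae : ∀ᵐ t ∂(volume : Measure ℝ), t ∈ Set.uIoc a b →
        (if t ≤ s then κ₁ s t else κ₂ s t) * (x t - Pn r n x t)
          = (if t ≤ s then κ₁ s t else κ₂ s t) * φ t := by
      filter_upwards [ae_ne b] with t htb ht
      rw [Set.uIoc_of_le hab.le] at ht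
      rw [hPn ht.1 (lt_of_le_of_ne ht.2 htb)]
    rw [intervalIntegral.integral_congr_ae hae]
    have hcrude : |∫ t in a..b, (if t ≤ s then κ₁ s t else κ₂ s t) * φ t|
        ≤ (B * E) * |b - a| := by
      have := intervalIntegral.norm_integral_le_of_norm_le_const
        (C := B * E) (f := fun t => (if t ≤ s then κ₁ s t else κ₂ s t) * φ t)
        (a := a) (b := b) ?_
      · rwa [Real.norm_eq_abs] at this
      · intro t ht
        rw [Set.uIoc_of_le hab.le] at ht
        have ht' : t ∈ Icc a b := Ioc_subset_Icc_self ht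
        rw [Real.norm_eq_abs, abs_mul]
        have hG : |if t ≤ s then κ₁ s t else κ₂ s t| ≤ B := by
          by_cases hts : t ≤ s
          · rw [if_pos hts]
            exact hB1 (s,t) ⟨le_trans ha0 ht'.1, hts, hs.2⟩
          · rw [if_neg hts]
            exact hB2 (s,t) ⟨hs.1, (not_le.1 hts).le, le_trans ht'.2 hb1⟩
        exact mul_le_mul hG (hφb t ht') (abs_nonneg _) hB0
    have hba : |b - a| = 1/n := by
      rw [abs_of_pos (by linarith : (0:ℝ) < b - a)]; exact hwidth
    rw [hba] at hcrude
    have hval : B * E * (1/(n:ℝ)) = B * CEc r * M * (1/(n:ℝ))^(2*r+2) := by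
      rw [hE_def, show 2*r+2 = (2*r+1)+1 from rfl, pow_succ]
      ring
    rw [hval] at hcrude
    refine hcrude.trans ?_
    rw [if_pos hidx.symm]
    have hfirst : 0 ≤ (L * CEc r + B * CIc r) * M * (1/(n:ℝ))^(2*r+3) := by
      apply mul_nonneg (mul_nonneg ?_ hM0) (by positivity)
      exact add_nonneg (mul_nonneg hL0 (CEc_nonneg r)) (mul_nonneg hB0 (CIc_nonneg r))
    linarith

end Aux

/-- there is a constant `C`, independent of `n` and `x`, such that for every
`n ≥ 1` and every `x ∈ C^{2r+2}[0,1]`, `‖K(I − Pₙ)x‖∞ ≤ C ‖x‖_{2r+2,∞} h^{2r+2}`. -/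


theorem stmt6 (r : ℕ) (hr : 1 ≤ r) (κ₁ κ₂ : ℝ → ℝ → ℝ)
    -- κ₁, κ₂ are twice continuously differentiable on Ω₁, Ω₂ respectively
    (hκ₁ : ContDiffOn ℝ 2 (Function.uncurry κ₁) {p : ℝ × ℝ | 0 ≤ p.2 ∧ p.2 ≤ p.1 ∧ p.1 ≤ 1})
    (hκ₂ : ContDiffOn ℝ 2 (Function.uncurry κ₂) {p : ℝ × ℝ | 0 ≤ p.1 ∧ p.1 ≤ p.2 ∧ p.2 ≤ 1})
    -- they agree on the diagonal
    (hdiag : ∀ s ∈ Icc (0:ℝ) 1, κ₁ s s = κ₂ s s) :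
    ∃ C : ℝ, ∀ n : ℕ, 1 ≤ n → ∀ x : ℝ → ℝ, ContDiffOn ℝ (2 * r + 2 : ℕ) x (Icc (0:ℝ) 1) →
      supNorm (Kop κ₁ κ₂ (fun t => x t - Pn r n x t))
        ≤ C * normC (2 * r + 2) x * (1 / (n:ℝ)) ^ (2 * r + 2) := by
  obtain ⟨B₁, L₁, hB₁0, hL₁0, hB₁, hL₁⟩ :=
    Aux.kernel_bounds Aux.tri1_compact Aux.tri1_convex Aux.tri1_interior
      (hκ₁.of_le (by norm_num))
  obtain ⟨B₂, L₂, hB₂0, hL₂0, hB₂, hL₂⟩ :=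
    Aux.kernel_bounds Aux.tri2_compact Aux.tri2_convex Aux.tri2_interior
      (hκ₂.of_le (by norm_num))
  set B : ℝ := max B₁ B₂ with hB_def
  set L : ℝ := max L₁ L₂ with hL_def
  have hB0 : 0 ≤ B := le_trans hB₁0 (le_max_left _ _)
  have hL0 : 0 ≤ L := le_trans hL₁0 (le_max_left _ _)
  have hB1 : ∀ p ∈ {p : ℝ × ℝ | 0 ≤ p.2 ∧ p.2 ≤ p.1 ∧ p.1 ≤ 1}, |Function.uncurry κ₁ p| ≤ B :=
    fun p hp => le_trans (hB₁ p hp) (le_max_left _ _)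
  have hB2 : ∀ p ∈ {p : ℝ × ℝ | 0 ≤ p.1 ∧ p.1 ≤ p.2 ∧ p.2 ≤ 1}, |Function.uncurry κ₂ p| ≤ B :=
    fun p hp => le_trans (hB₂ p hp) (le_max_right _ _)
  have hL1 : ∀ p ∈ {p : ℝ × ℝ | 0 ≤ p.2 ∧ p.2 ≤ p.1 ∧ p.1 ≤ 1},
      ∀ q ∈ {p : ℝ × ℝ | 0 ≤ p.2 ∧ p.2 ≤ p.1 ∧ p.1 ≤ 1},
        |Function.uncurry κ₁ p - Function.uncurry κ₁ q| ≤ L * ‖p - q‖ :=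
    fun p hp q hq => le_trans (hL₁ p hp q hq)
      (mul_le_mul_of_nonneg_right (le_max_left _ _) (norm_nonneg _))
  have hL2 : ∀ p ∈ {p : ℝ × ℝ | 0 ≤ p.1 ∧ p.1 ≤ p.2 ∧ p.2 ≤ 1},
      ∀ q ∈ {p : ℝ × ℝ | 0 ≤ p.1 ∧ p.1 ≤ p.2 ∧ p.2 ≤ 1},
        |Function.uncurry κ₂ p - Function.uncurry κ₂ q| ≤ L * ‖p - q‖ :=
    fun p hp q hq => le_trans (hL₂ p hp q hq)
      (mul_le_mul_of_nonneg_right (le_max_right _ _) (norm_nonneg _))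
  refine ⟨(L * Aux.CEc r + B * Aux.CIc r) + B * Aux.CEc r, ?_⟩
  intro n hn x hx
  have hn' : (0:ℝ) < (n:ℝ) := by exact_mod_cast hn
  set M : ℝ := normC (2*r+2) x with hM_def
  have hM0 : 0 ≤ M := Aux.normC_nonneg hx
  have key : ∀ s ∈ Icc (0:ℝ) 1,
      |Kop κ₁ κ₂ (fun t => x t - Pn r n x t) s|
        ≤ ((L * Aux.CEc r + B * Aux.CIc r) + B * Aux.CEc r) * M * (1/(n:ℝ))^(2*r+2) := by
    intro s hs
    have hsplit : Kop κ₁ κ₂ (fun t => x t - Pn r n x t) s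
        = ∑ k ∈ Finset.range n, ∫ t in (((k:ℕ):ℝ)/n)..(((k+1:ℕ):ℝ)/n),
            (if t ≤ s then κ₁ s t else κ₂ s t) * (x t - Pn r n x t) := by
      rw [Kop]
      have := intervalIntegral.sum_integral_adjacent_intervals
        (μ := volume) (a := fun k : ℕ => ((k:ℕ):ℝ)/n) (n := n)
        (f := fun t => (if t ≤ s then κ₁ s t else κ₂ s t) * (x t - Pn r n x t)) ?hint
      · have e0 : ((0:ℕ):ℝ)/(n:ℝ) = 0 := by simp
        have en : ((n:ℕ):ℝ)/(n:ℝ) = 1 := div_self hn'.ne'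
        rw [e0, en] at this
        exact this.symm
      · intro k hk
        have h := Aux.piece_integrable (j := k+1) hr hn (by omega) (by omega)
          hκ₁.continuousOn hκ₂.continuousOn hs hx.continuousOn
        have e1 : (((k+1:ℕ):ℝ)-1)/(n:ℝ) = ((k:ℕ):ℝ)/n := by push_cast; ring
        rwa [e1] at h
    rw [hsplit]
    have hterm : ∀ k ∈ Finset.range n,
        |∫ t in (((k:ℕ):ℝ)/n)..(((k+1:ℕ):ℝ)/n),
            (if t ≤ s then κ₁ s t else κ₂ s t) * (x t - Pn r n x t)|
          ≤ (L * Aux.CEc r + B * Aux.CIc r) * M * (1/(n:ℝ))^(2*r+3)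
            + (if k+1 = interpIdx n s then B * Aux.CEc r * M * (1/(n:ℝ))^(2*r+2) else 0) := by
      intro k hk
      have h := Aux.piece_bound (j := k+1) hr hn (by omega)
        (by have := Finset.mem_range.mp hk; omega)
        hB0 hL0 hB1 hB2 hL1 hL2 hκ₁.continuousOn hκ₂.continuousOn hs hx
      have e1 : (((k+1:ℕ):ℝ)-1)/(n:ℝ) = ((k:ℕ):ℝ)/n := by push_cast; ring
      rwa [e1] at h
    calc |∑ k ∈ Finset.range n, ∫ t in (((k:ℕ):ℝ)/n)..(((k+1:ℕ):ℝ)/n),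
            (if t ≤ s then κ₁ s t else κ₂ s t) * (x t - Pn r n x t)|
        ≤ ∑ k ∈ Finset.range n, |∫ t in (((k:ℕ):ℝ)/n)..(((k+1:ℕ):ℝ)/n),
            (if t ≤ s then κ₁ s t else κ₂ s t) * (x t - Pn r n x t)| :=
          Finset.abs_sum_le_sum_abs _ _
      _ ≤ ∑ k ∈ Finset.range n, ((L * Aux.CEc r + B * Aux.CIc r) * M * (1/(n:ℝ))^(2*r+3)
            + (if k+1 = interpIdx n s then B * Aux.CEc r * M * (1/(n:ℝ))^(2*r+2) else 0)) :=
          Finset.sum_le_sum hterm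
      _ = (n:ℝ) * ((L * Aux.CEc r + B * Aux.CIc r) * M * (1/(n:ℝ))^(2*r+3))
            + ∑ k ∈ Finset.range n,
              (if k+1 = interpIdx n s then B * Aux.CEc r * M * (1/(n:ℝ))^(2*r+2) else 0) := by
          rw [Finset.sum_add_distrib, Finset.sum_const, Finset.card_range, nsmul_eq_mul]
      _ ≤ (n:ℝ) * ((L * Aux.CEc r + B * Aux.CIc r) * M * (1/(n:ℝ))^(2*r+3))
            + B * Aux.CEc r * M * (1/(n:ℝ))^(2*r+2) := by
          apply add_le_add_right
          have hcond : ∀ k : ℕ, (k+1 = interpIdx n s) ↔ (k = interpIdx n s - 1) := by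
            have h1 : 1 ≤ interpIdx n s := (Aux.interpIdx_facts hn hs).1
            intro k; omega
          have hrw : ∀ k : ℕ, (if k+1 = interpIdx n s
                then B * Aux.CEc r * M * (1/(n:ℝ))^(2*r+2) else 0)
              = (if k = interpIdx n s - 1
                then B * Aux.CEc r * M * (1/(n:ℝ))^(2*r+2) else 0) := by
            intro k
            exact if_congr (hcond k) rfl rfl
          simp_rw [hrw]
          rw [Finset.sum_ite_eq' (Finset.range n) (interpIdx n s - 1)
            (fun _ => B * Aux.CEc r * M * (1/(n:ℝ))^(2*r+2))]
          split_ifs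
          · exact le_refl _
          · exact mul_nonneg (mul_nonneg (mul_nonneg hB0 (Aux.CEc_nonneg r)) hM0) (by positivity)
      _ = ((L * Aux.CEc r + B * Aux.CIc r) + B * Aux.CEc r) * M * (1/(n:ℝ))^(2*r+2) := by
          have hpow : (n:ℝ) * (1/(n:ℝ))^(2*r+3) = (1/(n:ℝ))^(2*r+2) := by
            rw [show 2*r+3 = (2*r+2)+1 from rfl, pow_succ]
            field_simp
          calc (n:ℝ) * ((L * Aux.CEc r + B * Aux.CIc r) * M * (1/(n:ℝ))^(2*r+3))
                + B * Aux.CEc r * M * (1/(n:ℝ))^(2*r+2)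
              = (L * Aux.CEc r + B * Aux.CIc r) * M * ((n:ℝ) * (1/(n:ℝ))^(2*r+3))
                + B * Aux.CEc r * M * (1/(n:ℝ))^(2*r+2) := by ring
            _ = _ := by rw [hpow]; ring
  haveI : Nonempty (Set.Icc (0:ℝ) 1) := ⟨⟨0, by norm_num, by norm_num⟩⟩
  rw [supNorm]
  exact ciSup_le fun t => key t.1 t.2
end

section
/- There exists a constant C, independent of n and x, such that for every n ≥ 1 and every x ∈ C^{2r+2}[0,1], ‖(I − Pₙ)K(I − Pₙ)x‖∞ ≤ C ‖x‖_{2r+2,∞} h^{2r+2}. -/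
open Set MeasureTheory

lemma eval_basis_scale {N : ℕ} (u : Fin N → ℝ) (a c : ℝ) (hc : c ≠ 0) (k : Fin N) (σ : ℝ) :
    Polynomial.eval (a + c * σ) (Lagrange.basis Finset.univ (fun i => a + c * u i) k)
      = Polynomial.eval σ (Lagrange.basis Finset.univ u k) := by
  unfold Lagrange.basis
  rw [Polynomial.eval_prod, Polynomial.eval_prod]
  refine Finset.prod_congr rfl fun i hi => ?_
  simp only [Lagrange.basisDivisor, Polynomial.eval_mul, Polynomial.eval_C,
    Polynomial.eval_sub, Polynomial.eval_X]
  have h1 : a + c * u k - (a + c * u i) = c * (u k - u i) := by ring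
  have h2 : a + c * σ - (a + c * u i) = c * (σ - u i) := by ring
  rw [h1, h2, mul_inv]
  calc c⁻¹ * (u k - u i)⁻¹ * (c * (σ - u i))
      = (c⁻¹ * c) * ((u k - u i)⁻¹ * (σ - u i)) := by ring
    _ = (u k - u i)⁻¹ * (σ - u i) := by rw [inv_mul_cancel₀ hc, one_mul]

lemma interpIdx_spec {n : ℕ} (hn : 1 ≤ n) {s : ℝ} (hs : s ∈ Icc (0:ℝ) 1) :
    1 ≤ interpIdx n s ∧ interpIdx n s ≤ n ∧
      ((interpIdx n s : ℝ) - 1) / n ≤ s ∧ s ≤ (interpIdx n s : ℝ) / n := by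
  have hn0 : (0:ℝ) < n := by exact_mod_cast hn
  obtain ⟨hs0, hs1⟩ := hs
  have hsn0 : 0 ≤ s * n := by positivity
  have hfl : (0:ℤ) ≤ ⌊s * n⌋ := Int.floor_nonneg.2 hsn0
  set m : ℕ := ⌊s * n⌋.toNat with hm
  have hmz : ((m : ℤ) : ℝ) = ((⌊s * n⌋ : ℤ) : ℝ) := by
    rw [hm, Int.toNat_of_nonneg hfl]
  have hmr : (m : ℝ) ≤ s * n := by
    have := Int.floor_le (s * n)
    push_cast at hmz ⊢
    linarith [hmz ▸ this]
  have hmr2 : s * n < (m : ℝ) + 1 := by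
    have := Int.lt_floor_add_one (s * n)
    push_cast at hmz ⊢
    linarith [hmz ▸ this]
  unfold interpIdx
  rcases le_or_gt (m + 1) n with h | h
  · rw [min_eq_right h]
    refine ⟨le_add_self, h, ?_, ?_⟩
    · rw [div_le_iff₀ hn0]; push_cast; linarith
    · rw [le_div_iff₀ hn0]; push_cast; linarith
  · rw [min_eq_left h.le]
    have hnm : (n : ℝ) ≤ m := by exact_mod_cast Nat.lt_succ_iff.mp h
    have h1s : 1 ≤ s := by
      by_contra hc
      push_neg at hc
      nlinarith
    have hseq : s = 1 := le_antisymm hs1 h1s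
    refine ⟨hn, le_rfl, ?_, ?_⟩
    · rw [div_le_iff₀ hn0, hseq]; push_cast; linarith
    · rw [le_div_iff₀ hn0, hseq]; push_cast; linarith

lemma nodes_mem {r n : ℕ} (j : ℕ) (hr : 1 ≤ r) (hn : 1 ≤ n) (k : Fin (2*r+1)) :
    nodes r n j k ∈ Icc (((j:ℝ)-1)/n) ((j:ℝ)/n) := by
  have hr0 : (0:ℝ) < 2*(r:ℝ) := by
    have : (1:ℝ) ≤ r := by exact_mod_cast hr
    linarith
  have hn0 : (0:ℝ) < n := by exact_mod_cast hn
  have hk : (k.1:ℝ) ≤ 2*(r:ℝ) := by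
    have := k.2
    have : k.1 ≤ 2*r := by omega
    exact_mod_cast this
  have hq0 : 0 ≤ (k.1:ℝ) / (2*(r:ℝ)) := by positivity
  have hq1 : (k.1:ℝ) / (2*(r:ℝ)) ≤ 1 := by
    rw [div_le_one hr0]; exact hk
  unfold nodes
  constructor
  · nlinarith [one_div_pos.2 hn0]
  · have : ((j:ℝ)-1)/n + 1 * (1/n) = (j:ℝ)/n := by ring
    nlinarith [one_div_pos.2 hn0]

lemma nodes_injOn {r n : ℕ} (j : ℕ) (hr : 1 ≤ r) (hn : 1 ≤ n) :
    Set.InjOn (nodes r n j) (Finset.univ : Finset (Fin (2*r+1))) := by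
  intro k _ l _ h
  have hr0 : (2*(r:ℝ)) ≠ 0 := by
    have : (1:ℝ) ≤ r := by exact_mod_cast hr
    positivity
  have hn0 : ((n:ℝ)) ≠ 0 := by
    have : (1:ℝ) ≤ n := by exact_mod_cast hn
    positivity
  unfold nodes at h
  field_simp at h
  have h' : (k.1:ℝ) = l.1 := by linarith
  exact Fin.ext (by exact_mod_cast h')

lemma interp_err {r n : ℕ} (hr : 1 ≤ r) (hn : 1 ≤ n) {Λ : ℝ}
    (hΛ : ∀ σ ∈ Icc (0:ℝ) 1, ∑ k : Fin (2*r+1),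
      |Polynomial.eval σ (Lagrange.basis Finset.univ
        (fun i : Fin (2*r+1) => (i.1:ℝ)/(2*(r:ℝ))) k)| ≤ Λ)
    {s : ℝ} (hs : s ∈ Icc (0:ℝ) 1) (g : ℝ → ℝ) (p : Polynomial ℝ)
    (hdeg : p.degree < (2*r+1 : ℕ)) {B : ℝ}
    (hB : ∀ t ∈ Icc (((interpIdx n s : ℝ)-1)/n) ((interpIdx n s : ℝ)/n), |g t - p.eval t| ≤ B) :
    |g s - Pn r n g s| ≤ (1+Λ)*B := by
  have hn0 : (0:ℝ) < n := by exact_mod_cast hn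
  obtain ⟨hj1, hjn, hsa, hsb⟩ := interpIdx_spec hn hs
  set j := interpIdx n s with hjdef
  set a : ℝ := ((j:ℝ)-1)/n with hadef
  set v : Fin (2*r+1) → ℝ := nodes r n j with hvdef
  have hinj : Set.InjOn v (Finset.univ : Finset (Fin (2*r+1))) := nodes_injOn j hr hn
  have hcard : p.degree < (Finset.univ : Finset (Fin (2*r+1))).card := by
    simpa using hdeg
  have hrepr : Lagrange.interpolate Finset.univ v (fun i => p.eval (v i)) = p :=
    (Lagrange.eq_interpolate hinj hcard).symm
  have hPn : Pn r n g s
      = Polynomial.eval s (Lagrange.interpolate Finset.univ v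
          (fun k => g (v k) - p.eval (v k))) + p.eval s := by
    have h0 : Pn r n g s
        = Polynomial.eval s (Lagrange.interpolate Finset.univ v (fun k => g (v k))) := rfl
    have hsplit : (fun k => g (v k))
        = (fun k => g (v k) - p.eval (v k)) + (fun k => p.eval (v k)) := by
      funext k; simp
    rw [h0, hsplit, map_add, Polynomial.eval_add, hrepr]
  -- bound the interpolation part
  have hBnn : 0 ≤ B := le_trans (abs_nonneg _) (hB s ⟨hsa, hsb⟩)
  set σ : ℝ := (s - a) * n with hσdef
  have hσ0 : 0 ≤ σ := by
    have : a ≤ s := hsa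
    nlinarith
  have hσ1 : σ ≤ 1 := by
    have hsb' : s ≤ a + 1/n := by
      have : (j:ℝ)/n = a + 1/n := by rw [hadef]; ring
      linarith [this ▸ hsb]
    have h1 : s - a ≤ 1/(n:ℝ) := by linarith
    have h2 : (s - a) * n ≤ (1/(n:ℝ)) * n := mul_le_mul_of_nonneg_right h1 hn0.le
    have h3 : (1/(n:ℝ)) * n = 1 := by field_simp
    rw [hσdef]; linarith
  have hsσ : s = a + (1/n) * σ := by
    rw [hσdef]; field_simp; ring
  have hveq : v = fun i : Fin (2*r+1) => a + (1/n) * ((i.1:ℝ)/(2*(r:ℝ))) := by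
    funext i
    rw [hvdef]; unfold nodes; rw [hadef]; push_cast; ring
  have hbasis : ∀ k : Fin (2*r+1),
      Polynomial.eval s (Lagrange.basis Finset.univ v k)
        = Polynomial.eval σ (Lagrange.basis Finset.univ
            (fun i : Fin (2*r+1) => (i.1:ℝ)/(2*(r:ℝ))) k) := by
    intro k
    rw [hveq, hsσ]
    exact eval_basis_scale _ a (1/n) (by positivity) k σ
  have hsum : ∑ k : Fin (2*r+1), |Polynomial.eval s (Lagrange.basis Finset.univ v k)| ≤ Λ := by
    calc ∑ k : Fin (2*r+1), |Polynomial.eval s (Lagrange.basis Finset.univ v k)|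
        = ∑ k : Fin (2*r+1), |Polynomial.eval σ (Lagrange.basis Finset.univ
            (fun i : Fin (2*r+1) => (i.1:ℝ)/(2*(r:ℝ))) k)| := by
          exact Finset.sum_congr rfl fun k _ => by rw [hbasis k]
      _ ≤ Λ := hΛ σ ⟨hσ0, hσ1⟩
  have hIbd : |Polynomial.eval s (Lagrange.interpolate Finset.univ v
      (fun k => g (v k) - p.eval (v k)))| ≤ Λ * B := by
    rw [Lagrange.interpolate_apply, Polynomial.eval_finset_sum]
    simp only [Polynomial.eval_mul, Polynomial.eval_C]
    calc |∑ k : Fin (2*r+1), (g (v k) - p.eval (v k)) *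
            Polynomial.eval s (Lagrange.basis Finset.univ v k)|
        ≤ ∑ k : Fin (2*r+1), |(g (v k) - p.eval (v k)) *
            Polynomial.eval s (Lagrange.basis Finset.univ v k)| :=
          Finset.abs_sum_le_sum_abs _ _
      _ ≤ ∑ k : Fin (2*r+1), B * |Polynomial.eval s (Lagrange.basis Finset.univ v k)| := by
          refine Finset.sum_le_sum fun k _ => ?_
          rw [abs_mul]
          refine mul_le_mul_of_nonneg_right ?_ (abs_nonneg _)
          exact hB (v k) (nodes_mem j hr hn k)
      _ = B * ∑ k : Fin (2*r+1), |Polynomial.eval s (Lagrange.basis Finset.univ v k)| := by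
          rw [Finset.mul_sum]
      _ ≤ B * Λ := mul_le_mul_of_nonneg_left hsum hBnn
      _ = Λ * B := mul_comm _ _
  calc |g s - Pn r n g s|
      = |(g s - p.eval s) - Polynomial.eval s (Lagrange.interpolate Finset.univ v
          (fun k => g (v k) - p.eval (v k)))| := by rw [hPn]; ring_nf
    _ ≤ |g s - p.eval s| + |Polynomial.eval s (Lagrange.interpolate Finset.univ v
          (fun k => g (v k) - p.eval (v k)))| := abs_sub _ _
    _ ≤ B + Λ * B := add_le_add (hB s ⟨hsa, hsb⟩) hIbd
    _ = (1+Λ)*B := by ring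

lemma iterDW_subset {x : ℝ → ℝ} {M : ℕ} (hx : ContDiffOn ℝ M x (Icc (0:ℝ) 1))
    {a b : ℝ} (hab : a < b) (hsub : Icc a b ⊆ Icc (0:ℝ) 1) {k : ℕ} (hk : k ≤ M) :
    ∀ t ∈ Icc a b, iteratedDerivWithin k x (Icc a b) t
      = iteratedDerivWithin k x (Icc (0:ℝ) 1) t := by
  induction k with
  | zero => intro t ht; simp
  | succ k IH =>
    intro t ht
    have hk' : k ≤ M := Nat.le_of_succ_le hk
    have hu : UniqueDiffWithinAt ℝ (Icc a b) t := (uniqueDiffOn_Icc hab) t ht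
    have hu2 : UniqueDiffWithinAt ℝ (Icc (0:ℝ) 1) t :=
      (uniqueDiffOn_Icc one_pos) t (hsub ht)
    rw [iteratedDerivWithin_succ, iteratedDerivWithin_succ]
    have hdiff : DifferentiableWithinAt ℝ (iteratedDerivWithin k x (Icc (0:ℝ) 1))
        (Icc (0:ℝ) 1) t :=
      hx.differentiableOn_iteratedDerivWithin (by exact_mod_cast Nat.lt_of_succ_le hk)
        (uniqueDiffOn_Icc one_pos) t (hsub ht)
    rw [derivWithin_congr (fun y hy => IH hk' y hy) (IH hk' t ht)]
    exact derivWithin_subset hsub hu hdiff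

lemma le_normC {M : ℕ} {x : ℝ → ℝ} (hx : ContDiffOn ℝ M x (Icc (0:ℝ) 1)) {i : ℕ} (hi : i ≤ M)
    {t : ℝ} (ht : t ∈ Icc (0:ℝ) 1) :
    |iteratedDerivWithin i x (Icc (0:ℝ) 1) t| ≤ normC M x := by
  have hcont : ContinuousOn (iteratedDerivWithin i x (Icc (0:ℝ) 1)) (Icc (0:ℝ) 1) :=
    hx.continuousOn_iteratedDerivWithin (by exact_mod_cast hi) (uniqueDiffOn_Icc one_pos)
  obtain ⟨C0, hC0⟩ := isCompact_Icc.exists_bound_of_continuousOn hcont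
  have hbdd : BddAbove (Set.range fun t : Set.Icc (0:ℝ) 1 =>
      |iteratedDerivWithin i x (Icc (0:ℝ) 1) t.1|) := by
    refine ⟨C0, ?_⟩
    rintro y ⟨u, rfl⟩
    have := hC0 u.1 u.2
    rwa [Real.norm_eq_abs] at this
  have h1 : |iteratedDerivWithin i x (Icc (0:ℝ) 1) t|
      ≤ ⨆ u : Set.Icc (0:ℝ) 1, |iteratedDerivWithin i x (Icc (0:ℝ) 1) u.1| :=
    le_ciSup hbdd (⟨t, ht⟩ : Set.Icc (0:ℝ) 1)
  have h2 : (⨆ u : Set.Icc (0:ℝ) 1, |iteratedDerivWithin i x (Icc (0:ℝ) 1) u.1|)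
      ≤ normC M x := by
    have := le_ciSup (f := fun j : Fin (M+1) => ⨆ u : Set.Icc (0:ℝ) 1,
        |iteratedDerivWithin j.1 x (Icc (0:ℝ) 1) u.1|) (Finite.bddAbove_range _)
        (⟨i, by omega⟩ : Fin (M+1))
    simpa [normC] using this
  exact h1.trans h2

lemma normC_nonneg {M : ℕ} {x : ℝ → ℝ} (hx : ContDiffOn ℝ M x (Icc (0:ℝ) 1)) :
    0 ≤ normC M x :=
  le_trans (abs_nonneg _) (le_normC hx (Nat.zero_le M) (by norm_num : (0:ℝ) ∈ Icc (0:ℝ) 1))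

lemma e_bound {r n : ℕ} (hr : 1 ≤ r) (hn : 1 ≤ n) {Λ : ℝ}
    (hΛ : ∀ σ ∈ Icc (0:ℝ) 1, ∑ k : Fin (2*r+1),
      |Polynomial.eval σ (Lagrange.basis Finset.univ
        (fun i : Fin (2*r+1) => (i.1:ℝ)/(2*(r:ℝ))) k)| ≤ Λ)
    {x : ℝ → ℝ} (hx : ContDiffOn ℝ (2*r+2 : ℕ) x (Icc (0:ℝ) 1))
    {t : ℝ} (ht : t ∈ Icc (0:ℝ) 1) :
    |x t - Pn r n x t| ≤ (1+Λ) * (normC (2*r+2) x * (1/(n:ℝ))^(2*r+1)) := by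
  have hn0 : (0:ℝ) < n := by exact_mod_cast hn
  obtain ⟨hj1, hjn, hta, htb⟩ := interpIdx_spec hn ht
  set j := interpIdx n t with hjdef
  set a : ℝ := ((j:ℝ)-1)/n with hadef
  set b : ℝ := (j:ℝ)/n with hbdef
  have hj1' : (1:ℝ) ≤ (j:ℝ) := by exact_mod_cast hj1
  have hjn' : (j:ℝ) ≤ (n:ℝ) := by exact_mod_cast hjn
  have hba : b - a = 1/n := by rw [hadef, hbdef]; ring
  have hab : a < b := by
    have : (0:ℝ) < 1/n := by positivity
    linarith
  have hsub : Icc a b ⊆ Icc (0:ℝ) 1 := by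
    apply Icc_subset_Icc
    · rw [hadef]
      exact div_nonneg (by linarith) hn0.le
    · rw [hbdef]
      rw [div_le_one hn0]
      exact hjn'
  set N := normC (2*r+2) x with hNdef
  have hN0 : 0 ≤ N := normC_nonneg hx
  have hDbd : ∀ y ∈ Icc a b,
      ‖iteratedDerivWithin (2*r+1) x (Icc a b) y‖ ≤ N := by
    intro y hy
    rw [Real.norm_eq_abs, iterDW_subset hx hab hsub (by omega) y hy]
    exact le_normC hx (by omega) (hsub hy)
  have hxab : ContDiffOn ℝ ((2*r : ℕ) + 1 : ℕ) x (Icc a b) :=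
    (hx.of_le (by exact_mod_cast (by omega : 2*r+1 ≤ 2*r+2))).mono hsub
  set p : Polynomial ℝ := ∑ k ∈ Finset.range (2*r+1),
    Polynomial.C (iteratedDerivWithin k x (Icc a b) a / (k.factorial : ℝ))
      * (Polynomial.X - Polynomial.C a)^k with hpdef
  have hpeval : ∀ y : ℝ, p.eval y = taylorWithinEval x (2*r) (Icc a b) a y := by
    intro y
    rw [taylor_within_apply, hpdef, Polynomial.eval_finset_sum]
    refine Finset.sum_congr rfl fun k _ => ?_
    simp only [Polynomial.eval_mul, Polynomial.eval_C, Polynomial.eval_pow,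
      Polynomial.eval_sub, Polynomial.eval_X, smul_eq_mul]
    ring
  have hdeg : p.degree < (2*r+1 : ℕ) := by
    apply lt_of_le_of_lt (Polynomial.degree_sum_le _ _)
    rw [Finset.sup_lt_iff (by exact_mod_cast WithBot.bot_lt_coe (2*r+1))]
    intro k hk
    apply lt_of_le_of_lt (Polynomial.degree_mul_le _ _)
    have h1 : (Polynomial.C (iteratedDerivWithin k x (Icc a b) a / (k.factorial : ℝ))).degree
        ≤ 0 := Polynomial.degree_C_le
    have h2 : ((Polynomial.X - Polynomial.C a)^k : Polynomial ℝ).degree ≤ (k : ℕ) := by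
      apply le_trans (Polynomial.degree_pow_le _ _)
      have := Polynomial.degree_X_sub_C a
      simp [this]
    have hk' : k < 2*r+1 := Finset.mem_range.mp hk
    calc (Polynomial.C (iteratedDerivWithin k x (Icc a b) a / (k.factorial : ℝ))).degree
          + ((Polynomial.X - Polynomial.C a)^k : Polynomial ℝ).degree
        ≤ 0 + (k : ℕ) := add_le_add h1 h2
      _ = (k : ℕ) := by rw [zero_add]
      _ < (2*r+1 : ℕ) := by exact_mod_cast hk'
  have hB : ∀ t' ∈ Icc (((interpIdx n t : ℝ)-1)/n) ((interpIdx n t : ℝ)/n),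
      |x t' - p.eval t'| ≤ N * (1/(n:ℝ))^(2*r+1) := by
    intro t' ht'
    rw [hpeval]
    have htay := taylor_mean_remainder_bound (n := 2*r) hab.le hxab ht' hDbd
    rw [Real.norm_eq_abs] at htay
    have hfac : (1:ℝ) ≤ ((2*r).factorial : ℝ) := by exact_mod_cast (2*r).factorial_pos
    have htpow : (t' - a)^(2*r+1) ≤ (1/(n:ℝ))^(2*r+1) := by
      apply pow_le_pow_left₀ (by linarith [ht'.1] : 0 ≤ t' - a)
      have := ht'.2
      linarith [hba ▸ (by linarith [ht'.2] : t' - a ≤ b - a)]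
    calc |x t' - taylorWithinEval x (2*r) (Icc a b) a t'|
        ≤ N * (t' - a)^(2*r+1) / ((2*r).factorial : ℝ) := htay
      _ ≤ N * (t' - a)^(2*r+1) := by
          apply div_le_self (mul_nonneg hN0 (pow_nonneg (by linarith [ht'.1]) _)) hfac
      _ ≤ N * (1/(n:ℝ))^(2*r+1) := mul_le_mul_of_nonneg_left htpow hN0
  exact interp_err hr hn hΛ ht x p hdeg hB

lemma measurable_interpIdx (n : ℕ) : Measurable (interpIdx n) := by
  have h1 : Measurable fun s : ℝ => ⌊s * (n:ℝ)⌋ :=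
    Int.measurable_floor.comp (measurable_id.mul_const _)
  have h2 : Measurable fun z : ℤ => min n (z.toNat + 1) := measurable_of_countable _
  exact h2.comp h1

lemma measurable_Pn (r n : ℕ) (x : ℝ → ℝ) : Measurable (Pn r n x) := by
  have h2 : Measurable fun q : ℝ × ℕ => Polynomial.eval q.1
      (Lagrange.interpolate (Finset.univ : Finset (Fin (2*r+1)))
        (nodes r n q.2) (fun k => x (nodes r n q.2 k))) :=
    measurable_from_prod_countable_left fun j =>
      (Polynomial.continuous (Lagrange.interpolate (Finset.univ : Finset (Fin (2*r+1)))
        (nodes r n j) (fun k => x (nodes r n j k)))).measurable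
  have : Pn r n x = fun s => (fun q : ℝ × ℕ => Polynomial.eval q.1
      (Lagrange.interpolate (Finset.univ : Finset (Fin (2*r+1)))
        (nodes r n q.2) (fun k => x (nodes r n q.2 k)))) (s, interpIdx n s) := rfl
  rw [this]
  exact h2.comp (measurable_id.prodMk (measurable_interpIdx n))

set_option maxHeartbeats 1000000 in
/-- there is a constant `C`, independent of `n` and `x`, such that for every
`n ≥ 1` and every `x ∈ C^{2r+2}[0,1]`, `‖(I − Pₙ)K(I − Pₙ)x‖∞ ≤ C ‖x‖_{2r+2,∞} h^{2r+2}`. -/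
theorem stmt7 (r : ℕ) (hr : 1 ≤ r) (κ₁ κ₂ : ℝ → ℝ → ℝ)
    -- κ₁, κ₂ are twice continuously differentiable on Ω₁, Ω₂ respectively
    (hκ₁ : ContDiffOn ℝ 2 (Function.uncurry κ₁) {p : ℝ × ℝ | 0 ≤ p.2 ∧ p.2 ≤ p.1 ∧ p.1 ≤ 1})
    (hκ₂ : ContDiffOn ℝ 2 (Function.uncurry κ₂) {p : ℝ × ℝ | 0 ≤ p.1 ∧ p.1 ≤ p.2 ∧ p.2 ≤ 1})
    -- they agree on the diagonal
    (hdiag : ∀ s ∈ Icc (0:ℝ) 1, κ₁ s s = κ₂ s s) :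
    ∃ C : ℝ, ∀ n : ℕ, 1 ≤ n → ∀ x : ℝ → ℝ, ContDiffOn ℝ (2 * r + 2 : ℕ) x (Icc (0:ℝ) 1) →
      supNorm (fun s =>
          Kop κ₁ κ₂ (fun t => x t - Pn r n x t) s
            - Pn r n (Kop κ₁ κ₂ (fun t => x t - Pn r n x t)) s)
        ≤ C * normC (2 * r + 2) x * (1 / (n:ℝ)) ^ (2 * r + 2) := by
  classical
  -- Lebesgue constant
  obtain ⟨Λ₀, hΛ₀⟩ : ∃ Λ₀ : ℝ, ∀ σ ∈ Icc (0:ℝ) 1, ∑ k : Fin (2*r+1),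
      |Polynomial.eval σ (Lagrange.basis Finset.univ
        (fun i : Fin (2*r+1) => (i.1:ℝ)/(2*(r:ℝ))) k)| ≤ Λ₀ := by
    have hcont : ContinuousOn (fun σ : ℝ => ∑ k : Fin (2*r+1),
        |Polynomial.eval σ (Lagrange.basis Finset.univ
          (fun i : Fin (2*r+1) => (i.1:ℝ)/(2*(r:ℝ))) k)|) (Icc (0:ℝ) 1) :=
      (continuous_finset_sum _ fun k _ => (Polynomial.continuous _).abs).continuousOn
    obtain ⟨C0, hC0⟩ := isCompact_Icc.exists_bound_of_continuousOn hcont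
    exact ⟨C0, fun σ hσ => (le_abs_self _).trans
      (by simpa [Real.norm_eq_abs] using hC0 σ hσ)⟩
  set Λ : ℝ := max Λ₀ 0 with hΛdef
  have hΛ : ∀ σ ∈ Icc (0:ℝ) 1, ∑ k : Fin (2*r+1),
      |Polynomial.eval σ (Lagrange.basis Finset.univ
        (fun i : Fin (2*r+1) => (i.1:ℝ)/(2*(r:ℝ))) k)| ≤ Λ :=
    fun σ hσ => (hΛ₀ σ hσ).trans (le_max_left _ _)
  have hΛ0 : 0 ≤ Λ := le_max_right _ _
  -- the two triangles
  set Ω₁ : Set (ℝ×ℝ) := {p : ℝ × ℝ | 0 ≤ p.2 ∧ p.2 ≤ p.1 ∧ p.1 ≤ 1} with hO1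
  set Ω₂ : Set (ℝ×ℝ) := {p : ℝ × ℝ | 0 ≤ p.1 ∧ p.1 ≤ p.2 ∧ p.2 ≤ 1} with hO2
  have hcl1 : IsClosed Ω₁ := by
    have h : Ω₁ = {p : ℝ×ℝ | 0 ≤ p.2} ∩ ({p : ℝ×ℝ | p.2 ≤ p.1} ∩ {p : ℝ×ℝ | p.1 ≤ 1}) := rfl
    rw [h]
    exact (isClosed_le continuous_const continuous_snd).inter
      ((isClosed_le continuous_snd continuous_fst).inter
        (isClosed_le continuous_fst continuous_const))
  have hcl2 : IsClosed Ω₂ := by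
    have h : Ω₂ = {p : ℝ×ℝ | 0 ≤ p.1} ∩ ({p : ℝ×ℝ | p.1 ≤ p.2} ∩ {p : ℝ×ℝ | p.2 ≤ 1}) := rfl
    rw [h]
    exact (isClosed_le continuous_const continuous_fst).inter
      ((isClosed_le continuous_fst continuous_snd).inter
        (isClosed_le continuous_snd continuous_const))
  have hcomp1 : IsCompact Ω₁ := by
    apply IsCompact.of_isClosed_subset (isCompact_Icc (a := ((0:ℝ),(0:ℝ))) (b := ((1:ℝ),(1:ℝ)))) hcl1
    rintro p ⟨h1, h2, h3⟩
    simp only [Set.mem_Icc, Prod.le_def]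
    refine ⟨⟨le_trans h1 h2, h1⟩, h3, le_trans h2 h3⟩
  have hcomp2 : IsCompact Ω₂ := by
    apply IsCompact.of_isClosed_subset (isCompact_Icc (a := ((0:ℝ),(0:ℝ))) (b := ((1:ℝ),(1:ℝ)))) hcl2
    rintro p ⟨h1, h2, h3⟩
    simp only [Set.mem_Icc, Prod.le_def]
    refine ⟨⟨h1, le_trans h1 h2⟩, le_trans h2 h3, h3⟩
  have hconv1 : Convex ℝ Ω₁ := by
    intro p hp q hq α β hα hβ hαβ
    obtain ⟨h1,h2,h3⟩ := hp; obtain ⟨h4,h5,h6⟩ := hq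
    refine ⟨?_, ?_, ?_⟩ <;>
      simp only [Prod.fst_add, Prod.snd_add, Prod.smul_fst, Prod.smul_snd, smul_eq_mul] <;>
      nlinarith
  have hconv2 : Convex ℝ Ω₂ := by
    intro p hp q hq α β hα hβ hαβ
    obtain ⟨h1,h2,h3⟩ := hp; obtain ⟨h4,h5,h6⟩ := hq
    refine ⟨?_, ?_, ?_⟩ <;>
      simp only [Prod.fst_add, Prod.snd_add, Prod.smul_fst, Prod.smul_snd, smul_eq_mul] <;>
      nlinarith
  have hint1 : (((2:ℝ)/3, (1:ℝ)/3)) ∈ interior Ω₁ := by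
    rw [mem_interior]
    refine ⟨{p : ℝ×ℝ | 0 < p.2} ∩ ({p : ℝ×ℝ | p.2 < p.1} ∩ {p : ℝ×ℝ | p.1 < 1}), ?_, ?_, ?_⟩
    · rintro p ⟨h1, h2, h3⟩; exact ⟨h1.le, h2.le, h3.le⟩
    · exact (isOpen_lt continuous_const continuous_snd).inter
        ((isOpen_lt continuous_snd continuous_fst).inter
          (isOpen_lt continuous_fst continuous_const))
    · refine ⟨by norm_num, by norm_num, by norm_num⟩
  have hint2 : (((1:ℝ)/3, (2:ℝ)/3)) ∈ interior Ω₂ := by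
    rw [mem_interior]
    refine ⟨{p : ℝ×ℝ | 0 < p.1} ∩ ({p : ℝ×ℝ | p.1 < p.2} ∩ {p : ℝ×ℝ | p.2 < 1}), ?_, ?_, ?_⟩
    · rintro p ⟨h1, h2, h3⟩; exact ⟨h1.le, h2.le, h3.le⟩
    · exact (isOpen_lt continuous_const continuous_fst).inter
        ((isOpen_lt continuous_fst continuous_snd).inter
          (isOpen_lt continuous_snd continuous_const))
    · refine ⟨by norm_num, by norm_num, by norm_num⟩
  have hUD1 : UniqueDiffOn ℝ Ω₁ := uniqueDiffOn_convex hconv1 ⟨_, hint1⟩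
  have hUD2 : UniqueDiffOn ℝ Ω₂ := uniqueDiffOn_convex hconv2 ⟨_, hint2⟩
  -- Lipschitz constants
  have hd1 : DifferentiableOn ℝ (Function.uncurry κ₁) Ω₁ :=
    (hκ₁.of_le one_le_two).differentiableOn one_ne_zero
  have hd2 : DifferentiableOn ℝ (Function.uncurry κ₂) Ω₂ :=
    (hκ₂.of_le one_le_two).differentiableOn one_ne_zero
  have hfc1 : ContinuousOn (fderivWithin ℝ (Function.uncurry κ₁) Ω₁) Ω₁ :=
    hκ₁.continuousOn_fderivWithin hUD1 (by norm_num)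
  have hfc2 : ContinuousOn (fderivWithin ℝ (Function.uncurry κ₂) Ω₂) Ω₂ :=
    hκ₂.continuousOn_fderivWithin hUD2 (by norm_num)
  obtain ⟨B₁, hB₁⟩ := hcomp1.exists_bound_of_continuousOn hfc1
  obtain ⟨B₂, hB₂⟩ := hcomp2.exists_bound_of_continuousOn hfc2
  have hlip1 : LipschitzOnWith B₁.toNNReal (Function.uncurry κ₁) Ω₁ := by
    apply hconv1.lipschitzOnWith_of_nnnorm_fderivWithin_le hd1
    intro p hp
    rw [← NNReal.coe_le_coe, coe_nnnorm, Real.coe_toNNReal']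
    exact le_max_of_le_left (hB₁ p hp)
  have hlip2 : LipschitzOnWith B₂.toNNReal (Function.uncurry κ₂) Ω₂ := by
    apply hconv2.lipschitzOnWith_of_nnnorm_fderivWithin_le hd2
    intro p hp
    rw [← NNReal.coe_le_coe, coe_nnnorm, Real.coe_toNNReal']
    exact le_max_of_le_left (hB₂ p hp)
  set L : ℝ := max (B₁.toNNReal : ℝ) (B₂.toNNReal : ℝ) with hLdef
  have hL0 : 0 ≤ L := le_trans (B₁.toNNReal.coe_nonneg) (le_max_left _ _)
  have hdistp : ∀ a b c : ℝ, dist ((a,c) : ℝ×ℝ) ((b,c) : ℝ×ℝ) = |a - b| := by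
    intro a b c
    rw [Prod.dist_eq, Real.dist_eq, Real.dist_eq]
    simp [sub_self, abs_nonneg, max_eq_left]
  have hlip1' : ∀ p ∈ Ω₁, ∀ q ∈ Ω₁,
      |Function.uncurry κ₁ p - Function.uncurry κ₁ q| ≤ L * dist p q := by
    intro p hp q hq
    have h := hlip1.dist_le_mul p hp q hq
    rw [Real.dist_eq] at h
    exact h.trans (mul_le_mul_of_nonneg_right (le_max_left _ _) dist_nonneg)
  have hlip2' : ∀ p ∈ Ω₂, ∀ q ∈ Ω₂,
      |Function.uncurry κ₂ p - Function.uncurry κ₂ q| ≤ L * dist p q := by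
    intro p hp q hq
    have h := hlip2.dist_le_mul p hp q hq
    rw [Real.dist_eq] at h
    exact h.trans (mul_le_mul_of_nonneg_right (le_max_right _ _) dist_nonneg)
  -- kernel difference estimate
  have hker : ∀ s ∈ Icc (0:ℝ) 1, ∀ σ ∈ Icc (0:ℝ) 1, ∀ t ∈ Icc (0:ℝ) 1,
      |(if t ≤ s then κ₁ s t else κ₂ s t) - (if t ≤ σ then κ₁ σ t else κ₂ σ t)|
        ≤ L * |s - σ| := by
    have key : ∀ s ∈ Icc (0:ℝ) 1, ∀ σ ∈ Icc (0:ℝ) 1, σ ≤ s → ∀ t ∈ Icc (0:ℝ) 1,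
        |(if t ≤ s then κ₁ s t else κ₂ s t) - (if t ≤ σ then κ₁ σ t else κ₂ σ t)|
          ≤ L * |s - σ| := by
      intro s hs σ hσ hσs t htc
      by_cases h1 : t ≤ σ
      · have h2 : t ≤ s := h1.trans hσs
        rw [if_pos h2, if_pos h1]
        have h := hlip1' (s,t) ⟨htc.1, h2, hs.2⟩ (σ,t) ⟨htc.1, h1, hσ.2⟩
        rwa [hdistp] at h
      · push_neg at h1
        by_cases h2 : t ≤ s
        · rw [if_pos h2, if_neg (not_le.mpr h1)]
          have hd := hdiag t htc
          have ha := hlip1' (s,t) ⟨htc.1, h2, hs.2⟩ (t,t) ⟨htc.1, le_refl t, htc.2⟩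
          have hb := hlip2' (t,t) ⟨htc.1, le_refl t, htc.2⟩ (σ,t) ⟨hσ.1, h1.le, htc.2⟩
          rw [hdistp] at ha hb
          have hstep : |κ₁ s t - κ₂ σ t| ≤ |κ₁ s t - κ₁ t t| + |κ₁ t t - κ₂ σ t| :=
            abs_sub_le _ _ _
          have hd' : |κ₁ t t - κ₂ σ t| = |κ₂ t t - κ₂ σ t| := by rw [hd]
          have e1 : |s - t| = s - t := abs_of_nonneg (by linarith)
          have e2 : |t - σ| = t - σ := abs_of_nonneg (by linarith)
          have e3 : |s - σ| = s - σ := abs_of_nonneg (by linarith)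
          calc |κ₁ s t - κ₂ σ t|
              ≤ |κ₁ s t - κ₁ t t| + |κ₂ t t - κ₂ σ t| := by rw [← hd']; exact hstep
            _ ≤ L * |s - t| + L * |t - σ| := add_le_add ha hb
            _ = L * |s - σ| := by rw [e1, e2, e3]; ring
        · push_neg at h2
          rw [if_neg (not_le.mpr h2), if_neg (not_le.mpr h1)]
          have h := hlip2' (s,t) ⟨hs.1, h2.le, htc.2⟩ (σ,t) ⟨hσ.1, h1.le, htc.2⟩
          rwa [hdistp] at h
    intro s hs σ hσ t htc
    rcases le_total σ s with h | h
    · exact key s hs σ hσ h t htc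
    · rw [abs_sub_comm, abs_sub_comm s σ]
      exact key σ hσ s hs h t htc
  refine ⟨(1+Λ)^2 * L, ?_⟩
  intro n hn x hx
  have hn0 : (0:ℝ) < n := by exact_mod_cast hn
  set e : ℝ → ℝ := fun t => x t - Pn r n x t with hedef
  set N : ℝ := normC (2*r+2) x with hNdef
  have hN0 : 0 ≤ N := normC_nonneg hx
  set Eb : ℝ := (1+Λ) * (N * (1/(n:ℝ))^(2*r+1)) with hEdef
  have hEb : ∀ t ∈ Icc (0:ℝ) 1, |e t| ≤ Eb := fun t ht => e_bound hr hn hΛ hx ht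
  have hEb0 : 0 ≤ Eb := by
    apply mul_nonneg (by linarith)
    positivity
  have hxcont : ContinuousOn x (Icc (0:ℝ) 1) := hx.continuousOn
  have hPmeas := measurable_Pn r n x
  have heaem : ∀ u : Set ℝ, MeasurableSet u → u ⊆ Icc (0:ℝ) 1 →
      AEStronglyMeasurable e (volume.restrict u) := by
    intro u hu hsu
    exact ((hxcont.mono hsu).aestronglyMeasurable hu).sub
      (hPmeas.aestronglyMeasurable.restrict)
  have hInt : ∀ s ∈ Icc (0:ℝ) 1, IntervalIntegrable
      (fun t => (if t ≤ s then κ₁ s t else κ₂ s t) * e t) volume 0 1 := by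
    intro s hs
    have hs0 := hs.1
    have hs1 := hs.2
    apply IntervalIntegrable.trans (b := s)
    · rw [intervalIntegrable_iff, uIoc_of_le hs0]
      have hcont : ContinuousOn (fun t => κ₁ s t) (Icc 0 s) := by
        have heq : (fun t => κ₁ s t) = Function.uncurry κ₁ ∘ (fun t => (s, t)) := rfl
        rw [heq]
        apply (hκ₁.continuousOn).comp (Continuous.continuousOn (continuous_const.prodMk continuous_id))
        intro t htm
        exact ⟨htm.1, htm.2, hs1⟩
      obtain ⟨M₁, hM₁⟩ := isCompact_Icc.exists_bound_of_continuousOn hcont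
      have hbase : IntegrableOn (fun t => κ₁ s t * e t) (Ioc 0 s) := by
        apply Integrable.mono' (g := fun _ => M₁ * Eb)
        · exact integrableOn_const measure_Ioc_lt_top.ne
        · exact ((hcont.mono Ioc_subset_Icc_self).aestronglyMeasurable measurableSet_Ioc).mul
            (heaem _ measurableSet_Ioc (fun t ht => ⟨ht.1.le, ht.2.trans hs1⟩))
        · rw [ae_restrict_iff' measurableSet_Ioc]
          refine Filter.Eventually.of_forall fun t ht => ?_
          rw [Real.norm_eq_abs, abs_mul]
          have h1 := hM₁ t (Ioc_subset_Icc_self ht)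
          rw [Real.norm_eq_abs] at h1
          exact mul_le_mul h1 (hEb t ⟨ht.1.le, ht.2.trans hs1⟩) (abs_nonneg _)
            ((abs_nonneg _).trans h1)
      exact hbase.congr_fun (fun t ht => by rw [if_pos ht.2]) measurableSet_Ioc
    · rw [intervalIntegrable_iff, uIoc_of_le hs1]
      have hcont : ContinuousOn (fun t => κ₂ s t) (Icc s 1) := by
        have heq : (fun t => κ₂ s t) = Function.uncurry κ₂ ∘ (fun t => (s, t)) := rfl
        rw [heq]
        apply (hκ₂.continuousOn).comp (Continuous.continuousOn (continuous_const.prodMk continuous_id))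
        intro t htm
        exact ⟨hs0, htm.1, htm.2⟩
      obtain ⟨M₂, hM₂⟩ := isCompact_Icc.exists_bound_of_continuousOn hcont
      have hbase : IntegrableOn (fun t => κ₂ s t * e t) (Ioc s 1) := by
        apply Integrable.mono' (g := fun _ => M₂ * Eb)
        · exact integrableOn_const measure_Ioc_lt_top.ne
        · exact ((hcont.mono Ioc_subset_Icc_self).aestronglyMeasurable measurableSet_Ioc).mul
            (heaem _ measurableSet_Ioc (fun t ht => ⟨hs0.trans ht.1.le, ht.2⟩))
        · rw [ae_restrict_iff' measurableSet_Ioc]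
          refine Filter.Eventually.of_forall fun t ht => ?_
          rw [Real.norm_eq_abs, abs_mul]
          have h1 := hM₂ t (Ioc_subset_Icc_self ht)
          rw [Real.norm_eq_abs] at h1
          exact mul_le_mul h1 (hEb t ⟨hs0.trans ht.1.le, ht.2⟩) (abs_nonneg _)
            ((abs_nonneg _).trans h1)
      exact hbase.congr_fun (fun t ht => by rw [if_neg (not_le.mpr ht.1)]) measurableSet_Ioc
  have hKe : ∀ s ∈ Icc (0:ℝ) 1, ∀ σ ∈ Icc (0:ℝ) 1,
      |Kop κ₁ κ₂ e s - Kop κ₁ κ₂ e σ| ≤ L * Eb * |s - σ| := by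
    intro s hs σ hσ
    have h1 := hInt s hs
    have h2 := hInt σ hσ
    have hsubint : Kop κ₁ κ₂ e s - Kop κ₁ κ₂ e σ
        = ∫ t in (0:ℝ)..1, ((if t ≤ s then κ₁ s t else κ₂ s t)
            - (if t ≤ σ then κ₁ σ t else κ₂ σ t)) * e t := by
      simp only [Kop]
      rw [← intervalIntegral.integral_sub h1 h2]
      congr 1
      funext t
      ring
    rw [hsubint]
    have hbd : ∀ t ∈ Set.uIoc (0:ℝ) 1,
        ‖((if t ≤ s then κ₁ s t else κ₂ s t) - (if t ≤ σ then κ₁ σ t else κ₂ σ t)) * e t‖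
          ≤ L * |s - σ| * Eb := by
      intro t ht
      have ht' : t ∈ Ioc (0:ℝ) 1 := by rwa [uIoc_of_le (by norm_num : (0:ℝ) ≤ 1)] at ht
      have htc : t ∈ Icc (0:ℝ) 1 := ⟨ht'.1.le, ht'.2⟩
      rw [Real.norm_eq_abs, abs_mul]
      exact mul_le_mul (hker s hs σ hσ t htc) (hEb t htc) (abs_nonneg _)
        (mul_nonneg hL0 (abs_nonneg _))
    have h := intervalIntegral.norm_integral_le_of_norm_le_const hbd
    rw [Real.norm_eq_abs] at h
    calc |∫ t in (0:ℝ)..1, ((if t ≤ s then κ₁ s t else κ₂ s t)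
            - (if t ≤ σ then κ₁ σ t else κ₂ σ t)) * e t|
        ≤ L * |s - σ| * Eb * |1 - 0| := h
      _ = L * Eb * |s - σ| := by norm_num; ring
  have hmain : ∀ s ∈ Icc (0:ℝ) 1,
      |Kop κ₁ κ₂ e s - Pn r n (Kop κ₁ κ₂ e) s| ≤ (1+Λ) * (L * Eb * (1/(n:ℝ))) := by
    intro s hs
    obtain ⟨hj1, hjn, hsa, hsb⟩ := interpIdx_spec hn hs
    set a : ℝ := ((interpIdx n s : ℝ) - 1)/n with hadef
    have hj1' : (1:ℝ) ≤ (interpIdx n s : ℝ) := by exact_mod_cast hj1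
    have hjn' : ((interpIdx n s : ℝ)) ≤ (n:ℝ) := by exact_mod_cast hjn
    have haIcc : a ∈ Icc (0:ℝ) 1 := by
      constructor
      · exact div_nonneg (by linarith) hn0.le
      · rw [hadef, div_le_one hn0]; linarith
    have hdegC : (Polynomial.C (Kop κ₁ κ₂ e a)).degree < (2*r+1 : ℕ) :=
      lt_of_le_of_lt Polynomial.degree_C_le (by exact_mod_cast (by omega : 0 < 2*r+1))
    apply interp_err hr hn hΛ hs _ _ hdegC
    intro t htm
    rw [Polynomial.eval_C]
    have hbn : (interpIdx n s : ℝ)/n ≤ 1 := by rw [div_le_one hn0]; exact hjn'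
    have htIcc : t ∈ Icc (0:ℝ) 1 := ⟨le_trans haIcc.1 htm.1, le_trans htm.2 hbn⟩
    have hKet := hKe t htIcc a haIcc
    have hba : (interpIdx n s : ℝ)/n = a + 1/n := by rw [hadef]; ring
    have hta : |t - a| ≤ 1/(n:ℝ) := by
      rw [abs_of_nonneg (by linarith [htm.1])]
      have := htm.2
      linarith [hba ▸ htm.2]
    calc |Kop κ₁ κ₂ e t - Kop κ₁ κ₂ e a| ≤ L * Eb * |t - a| := hKet
      _ ≤ L * Eb * (1/(n:ℝ)) := mul_le_mul_of_nonneg_left hta (mul_nonneg hL0 hEb0)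
  haveI : Nonempty (Set.Icc (0:ℝ) 1) := ⟨⟨0, by norm_num⟩⟩
  rw [supNorm]
  apply ciSup_le
  rintro ⟨s, hs⟩
  have h := hmain s hs
  calc |Kop κ₁ κ₂ e s - Pn r n (Kop κ₁ κ₂ e) s|
      ≤ (1+Λ) * (L * Eb * (1/(n:ℝ))) := h
    _ = (1+Λ)^2 * L * N * (1/(n:ℝ))^(2*r+2) := by
        rw [hEdef]
        have hexp : 2*r+2 = (2*r+1)+1 := by omega
        rw [hexp, pow_succ]
        ring
end
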